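/- arXiv:1809.04477 — 5 statements merged into one kernel-verified Lean document; each statement's English description precedes it below -/
import Mathlib

section
/- With (Z₁, Z₂) as in the Pareto-based construction with a_n = n!, we have P(a_{2n-1}^{-1}(Z₁,Z₂) ∈ (1,2]×(1,2]) ~ (1 - 2^{-α}) a_{2n-1}^{-α} as n → ∞. -/
open MeasureTheory Filter Set

/-- `a_n = n!` as a real number. -/
noncomputable def afac (n : ℕ) : ℝ := (Nat.factorial n : ℝ)

/-- The (unnormalized) Pareto(α) measure restricted to a set `s`. -/
noncomputable def par (α : ℝ) (s : Set ℝ) : Measure ℝ :=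
  (volume.restrict s).withDensity (fun z => ENNReal.ofReal (α * z ^ (-α - 1)))

/-- The joint law of `(Z₁, Z₂)` in the Pareto-based construction. -/
noncomputable def nuPareto (α : ℝ) : Measure (ℝ × ℝ) :=
  (Measure.sum fun n : ℕ =>
    (par α (Ico (afac (2 * n + 1)) (afac (2 * n + 2)))).map (fun z => (z, z))) +
  Measure.sum fun n : ℕ =>
    (ENNReal.ofReal ((afac (2 * n + 2)) ^ (-α) - (afac (2 * n + 3)) ^ (-α)))⁻¹ •
      ((par α (Ico (afac (2 * n + 2)) (afac (2 * n + 3)))).prod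
        (par α (Ico (afac (2 * n + 2)) (afac (2 * n + 3)))))

lemma afac_pos (n : ℕ) : 0 < afac n := by
  unfold afac; exact_mod_cast Nat.factorial_pos n

lemma afac_mono : Monotone afac := fun m n h => by
  unfold afac; exact_mod_cast Nat.factorial_le h

lemma afac_succ (n : ℕ) : afac (n + 1) = (n + 1) * afac n := by
  unfold afac; rw [Nat.factorial_succ]; push_cast; ring

lemma par_null {α : ℝ} {s t : Set ℝ} (ht : MeasurableSet t) (h : t ∩ s = ∅) :
    par α s t = 0 := by
  refine (withDensity_absolutelyContinuous _ _) ?_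
  rw [Measure.restrict_apply ht, h, measure_empty]

lemma par_Ioc {α : ℝ} (hα : 0 < α) {a b c d : ℝ} (ha : 0 < a) (hab : a ≤ b)
    (hsub : Ioc a b ⊆ Ico c d) :
    par α (Ico c d) (Ioc a b) = ENNReal.ofReal (a ^ (-α) - b ^ (-α)) := by
  unfold par
  rw [withDensity_apply _ measurableSet_Ioc,
    Measure.restrict_restrict measurableSet_Ioc, inter_eq_left.mpr hsub]
  rw [← ofReal_integral_eq_lintegral_ofReal]
  · congr 1
    rw [← intervalIntegral.integral_of_le hab]
    rw [intervalIntegral.integral_const_mul, integral_rpow]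
    · have : -α - 1 + 1 = -α := by ring
      rw [this]
      have hαne : α ≠ 0 := ne_of_gt hα
      rw [div_neg, mul_neg, mul_div_cancel₀ _ (ne_of_gt hα)]
      ring
    · right
      constructor
      · intro h; linarith
      · intro h
        rcases h with h
        have := h.1
        simp [uIcc_of_le hab] at h
        linarith [h.1]
  · apply (ContinuousOn.integrableOn_compact isCompact_Icc ?_).mono_set Ioc_subset_Icc_self
    apply ContinuousOn.mul continuousOn_const
    intro x hx
    exact (Real.continuousAt_rpow_const x _ (Or.inl (by cases hx; linarith))).continuousWithinAt
  · filter_upwards [ae_restrict_mem measurableSet_Ioc] with x hx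
    have hx0 : 0 < x := lt_trans ha hx.1
    positivity

instance parSFinite (α : ℝ) (s : Set ℝ) : SFinite (par α s) := by
  unfold par; infer_instance

lemma nuPareto_eval (α : ℝ) (hα : 0 < α) (n : ℕ) (hn : 1 ≤ n) :
    nuPareto α {p : ℝ × ℝ |
          afac (2 * n + 1) < p.1 ∧ p.1 ≤ 2 * afac (2 * n + 1) ∧
          afac (2 * n + 1) < p.2 ∧ p.2 ≤ 2 * afac (2 * n + 1)} =
      ENNReal.ofReal ((afac (2 * n + 1)) ^ (-α) - (2 * afac (2 * n + 1)) ^ (-α)) := by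
  set a := afac (2 * n + 1) with ha
  have hapos : 0 < a := afac_pos _
  have hn' : (1 : ℝ) ≤ (n : ℝ) := by exact_mod_cast hn
  have hS : {p : ℝ × ℝ | a < p.1 ∧ p.1 ≤ 2 * a ∧ a < p.2 ∧ p.2 ≤ 2 * a} =
      Ioc a (2 * a) ×ˢ Ioc a (2 * a) := by
    ext ⟨x, y⟩; simp [and_assoc]
  have hmeas : MeasurableSet (Ioc a (2 * a) ×ˢ Ioc a (2 * a)) :=
    measurableSet_Ioc.prod measurableSet_Ioc
  have hdiag : (fun z : ℝ => (z, z)) ⁻¹' (Ioc a (2 * a) ×ˢ Ioc a (2 * a)) =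
      Ioc a (2 * a) := by ext z; simp
  -- key interval facts
  have h2n2 : afac (2 * n + 2) = (2 * n + 1 + 1) * a := by
    rw [ha]; rw [show 2 * n + 2 = (2 * n + 1) + 1 from rfl, afac_succ]; push_cast; ring
  have h4a : 4 * a ≤ afac (2 * n + 2) := by
    rw [h2n2]; nlinarith
  have hsub : Ioc a (2 * a) ⊆ Ico a (afac (2 * n + 2)) := by
    intro z hz; exact ⟨le_of_lt hz.1, lt_of_le_of_lt hz.2 (by nlinarith)⟩
  unfold nuPareto
  rw [hS, Measure.add_apply, Measure.sum_apply _ hmeas, Measure.sum_apply _ hmeas]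
  simp only [Measure.smul_apply, Measure.prod_prod]
  have hz : ∀ m : ℕ, par α (Ico (afac (2 * m + 2)) (afac (2 * m + 3))) (Ioc a (2 * a)) = 0 := by
    intro m
    apply par_null measurableSet_Ioc
    rw [Set.eq_empty_iff_forall_notMem]
    rintro z ⟨⟨hz1, hz2⟩, hz3, hz4⟩
    rcases lt_or_ge m n with hm | hm
    · have : afac (2 * m + 3) ≤ a := afac_mono (by omega)
      linarith
    · have h1 : afac (2 * n + 2) ≤ afac (2 * m + 2) := afac_mono (by omega)
      linarith
  simp only [hz, zero_mul, smul_zero, tsum_zero, add_zero]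
  have hterm1 : ∀ m : ℕ,
      ((par α (Ico (afac (2 * m + 1)) (afac (2 * m + 2)))).map (fun z => (z, z)))
        (Ioc a (2 * a) ×ˢ Ioc a (2 * a)) =
      if m = n then ENNReal.ofReal (a ^ (-α) - (2 * a) ^ (-α)) else 0 := by
    intro m
    rw [Measure.map_apply (by fun_prop : Measurable fun z : ℝ => (z, z)) hmeas, hdiag]
    by_cases hmn : m = n
    · subst hmn
      rw [if_pos rfl]
      exact par_Ioc hα hapos (by nlinarith) hsub
    · rw [if_neg hmn]
      apply par_null measurableSet_Ioc
      rw [Set.eq_empty_iff_forall_notMem]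
      rintro z ⟨⟨hz1, hz2⟩, hz3, hz4⟩
      rcases lt_or_ge m n with hm | hm
      · have : afac (2 * m + 2) ≤ a := afac_mono (by omega)
        linarith
      · have hm' : n < m := lt_of_le_of_ne hm (Ne.symm hmn)
        have h1 : afac (2 * n + 2) ≤ afac (2 * m + 1) := afac_mono (by omega)
        linarith
  calc (∑' m : ℕ, ((par α (Ico (afac (2 * m + 1)) (afac (2 * m + 2)))).map (fun z => (z, z)))
        (Ioc a (2 * a) ×ˢ Ioc a (2 * a)))
      = ∑' m : ℕ, if m = n then ENNReal.ofReal (a ^ (-α) - (2 * a) ^ (-α)) else 0 :=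
        tsum_congr hterm1
    _ = ENNReal.ofReal (a ^ (-α) - (2 * a) ^ (-α)) := by
        rw [tsum_eq_single n (fun m hm => if_neg hm), if_pos rfl]

/-- `P(a_{2n-1}⁻¹ (Z₁,Z₂) ∈ (1,2] × (1,2]) ∼ (1 - 2^{-α}) a_{2n-1}^{-α}` as `n → ∞`. -/
theorem stmt_2 (α : ℝ) (hα : 0 < α) :
    Tendsto (fun n : ℕ =>
      ((nuPareto α) {p : ℝ × ℝ |
          afac (2 * n + 1) < p.1 ∧ p.1 ≤ 2 * afac (2 * n + 1) ∧
          afac (2 * n + 1) < p.2 ∧ p.2 ≤ 2 * afac (2 * n + 1)}).toReal /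
        ((1 - 2 ^ (-α)) * (afac (2 * n + 1)) ^ (-α)))
      atTop (nhds 1) := by
  have key : ∀ᶠ n in atTop, ((nuPareto α) {p : ℝ × ℝ |
          afac (2 * n + 1) < p.1 ∧ p.1 ≤ 2 * afac (2 * n + 1) ∧
          afac (2 * n + 1) < p.2 ∧ p.2 ≤ 2 * afac (2 * n + 1)}).toReal /
        ((1 - 2 ^ (-α)) * (afac (2 * n + 1)) ^ (-α)) = 1 := by
    filter_upwards [eventually_ge_atTop 1] with n hn
    rw [nuPareto_eval α hα n hn]
    set a := afac (2 * n + 1) with ha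
    have hapos : 0 < a := afac_pos _
    have h2 : (2 * a) ^ (-α) = 2 ^ (-α) * a ^ (-α) := Real.mul_rpow (by norm_num) hapos.le
    have hval : a ^ (-α) - (2 * a) ^ (-α) = (1 - 2 ^ (-α)) * a ^ (-α) := by rw [h2]; ring
    have h1 : (2 : ℝ) ^ (-α) < 1 :=
      Real.rpow_lt_one_of_one_lt_of_neg (by norm_num) (by linarith)
    have hap : 0 < a ^ (-α) := Real.rpow_pos_of_pos hapos _
    have hpos : 0 < (1 - 2 ^ (-α)) * a ^ (-α) := by nlinarith
    rw [hval, ENNReal.toReal_ofReal hpos.le, div_self (ne_of_gt hpos)]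
  exact Tendsto.congr' (key.mono fun n h => h.symm) tendsto_const_nhds
end

section
/- Let (Θ(t): t ∈ Z^k) satisfy the change-of-time identity with index α and P(‖Θ(0)‖=1)=1, and suppose E[‖Θ(s)‖^α] > 0 for a fixed s. Then the two probability measures on the unit sphere S^{d-1}: P₁(·) = E[‖Θ(s)‖^α 1(Θ(s)/‖Θ(s)‖ ∈ ·)]/E[‖Θ(s)‖^α] and P₂(·) = P(Θ(0) ∈ ·, Θ(−s) ≠ 0)/P(Θ(−s) ≠ 0) are equal. -/
open MeasureTheory Filter Classical
open scoped Classical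

/-- The change-of-time identity for a random field `Θ` indexed by `ℤ^k` with values in `ℝ^d`:
for every shift `s` and every bounded measurable functional `g`,
`E[g(Θ(·−s)) 1(Θ(−s) ≠ 0)] = E[g(Θ(·)/‖Θ(s)‖) ‖Θ(s)‖^α]`. -/
def ChangeOfTime {k d : ℕ} {Ω : Type*} [MeasurableSpace Ω] (μ : Measure Ω)
    (Θ : (Fin k → ℤ) → Ω → (Fin d → ℝ)) (α : ℝ) : Prop :=
  ∀ (s : Fin k → ℤ) (g : ((Fin k → ℤ) → (Fin d → ℝ)) → ℝ), Measurable g →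
    (∃ C : ℝ, ∀ x, |g x| ≤ C) →
    ∫ ω, g (fun t => Θ (t - s) ω) * (if Θ (-s) ω ≠ 0 then (1 : ℝ) else 0) ∂μ =
    ∫ ω, g (fun t => (‖Θ s ω‖)⁻¹ • Θ t ω) * ‖Θ s ω‖ ^ α ∂μ

/-- Under the change-of-time identity with `‖Θ(0)‖ = 1` a.s. and `E[‖Θ(s)‖^α] > 0`,
the two probability measures on the unit sphere,
`P₁(A) = E[‖Θ(s)‖^α 1(Θ(s)/‖Θ(s)‖ ∈ A)] / E[‖Θ(s)‖^α]` and
`P₂(A) = P(Θ(0) ∈ A, Θ(−s) ≠ 0) / P(Θ(−s) ≠ 0)`, are equal. -/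
theorem stmt_7 {k d : ℕ} {Ω : Type*} [MeasurableSpace Ω] (μ : Measure Ω)
    [IsProbabilityMeasure μ] (Θ : (Fin k → ℤ) → Ω → (Fin d → ℝ))
    (hmeas : ∀ t, Measurable (Θ t)) (α : ℝ) (hα : 0 < α)
    (h0 : ∀ᵐ ω ∂μ, ‖Θ 0 ω‖ = 1) (hct : ChangeOfTime μ Θ α) (s : Fin k → ℤ)
    (hpos : 0 < ∫ ω, ‖Θ s ω‖ ^ α ∂μ) :
    ∀ A : Set (Fin d → ℝ), MeasurableSet A →
      (∫ ω, ‖Θ s ω‖ ^ α *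
          (if (‖Θ s ω‖)⁻¹ • Θ s ω ∈ A then (1 : ℝ) else 0) ∂μ) /
        (∫ ω, ‖Θ s ω‖ ^ α ∂μ) =
      (μ {ω | Θ 0 ω ∈ A ∧ Θ (-s) ω ≠ 0}).toReal / (μ {ω | Θ (-s) ω ≠ 0}).toReal := by
  intro A hA
  have hg : Measurable fun x : ((Fin k → ℤ) → (Fin d → ℝ)) =>
      if x s ∈ A then (1 : ℝ) else 0 :=
    Measurable.ite (measurable_pi_apply s hA) measurable_const measurable_const
  have hbd : ∃ C : ℝ, ∀ x : ((Fin k → ℤ) → (Fin d → ℝ)),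
      |if x s ∈ A then (1 : ℝ) else 0| ≤ C := ⟨1, fun x => by split_ifs <;> simp⟩
  have key := hct s (fun x => if x s ∈ A then (1 : ℝ) else 0) hg hbd
  simp only [sub_self] at key
  have hone := hct s (fun _ => (1 : ℝ)) measurable_const ⟨1, fun x => by simp⟩
  simp only [one_mul] at hone
  have hS1 : MeasurableSet {ω | Θ 0 ω ∈ A ∧ Θ (-s) ω ≠ 0} := by
    have h : {ω | Θ 0 ω ∈ A ∧ Θ (-s) ω ≠ 0}
        = (Θ 0 ⁻¹' A) ∩ (Θ (-s) ⁻¹' {0})ᶜ := by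
      ext ω; simp [Set.mem_setOf_eq]
    rw [h]
    exact ((hmeas 0) hA).inter ((hmeas (-s)) (measurableSet_singleton 0)).compl
  have hS2 : MeasurableSet {ω | Θ (-s) ω ≠ 0} := by
    have h : {ω | Θ (-s) ω ≠ 0} = (Θ (-s) ⁻¹' {0})ᶜ := by ext ω; simp
    rw [h]
    exact ((hmeas (-s)) (measurableSet_singleton 0)).compl
  have hnum : (∫ ω, ‖Θ s ω‖ ^ α *
      (if (‖Θ s ω‖)⁻¹ • Θ s ω ∈ A then (1 : ℝ) else 0) ∂μ)
      = (μ {ω | Θ 0 ω ∈ A ∧ Θ (-s) ω ≠ 0}).toReal := by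
    have e1 : (∫ ω, ‖Θ s ω‖ ^ α *
        (if (‖Θ s ω‖)⁻¹ • Θ s ω ∈ A then (1 : ℝ) else 0) ∂μ)
        = ∫ ω, (if (‖Θ s ω‖)⁻¹ • Θ s ω ∈ A then (1 : ℝ) else 0) * ‖Θ s ω‖ ^ α ∂μ := by
      congr 1; ext ω; ring
    have e2 : (∫ ω, (if Θ 0 ω ∈ A then (1 : ℝ) else 0) *
        (if Θ (-s) ω ≠ 0 then (1 : ℝ) else 0) ∂μ)
        = ∫ ω, (if Θ 0 ω ∈ A ∧ Θ (-s) ω ≠ 0 then (1 : ℝ) else 0) ∂μ := by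
      congr 1; ext ω
      by_cases h1 : Θ 0 ω ∈ A <;> by_cases h2 : Θ (-s) ω ≠ 0 <;> simp [h1, h2]
    rw [e1, ← key, e2, ← measureReal_def, ← integral_indicator_one hS1]
    congr 1; ext ω
    by_cases h : Θ 0 ω ∈ A ∧ Θ (-s) ω ≠ 0 <;>
      simp [Set.indicator_apply, Set.mem_setOf_eq, h]
  have hden : (∫ ω, ‖Θ s ω‖ ^ α ∂μ) = (μ {ω | Θ (-s) ω ≠ 0}).toReal := by
    rw [← hone, ← measureReal_def, ← integral_indicator_one hS2]
    congr 1; ext ω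
    by_cases h : Θ (-s) ω ≠ 0 <;> simp [Set.indicator_apply, Set.mem_setOf_eq, h]
  rw [hnum, hden]
end

section
/- For the max-moving average field X on Z² with i.i.d. Fréchet(1) innovations Z and weights a_{-1,-1},a_{-1,1},a_{1,1},a_{1,-1} ∈ [0,1], the classical extremal index exists and equals θ_cl = 1/(1+s), where s = a_{-1,-1}+a_{-1,1}+a_{1,1}+a_{1,-1}: that is, for any array (u_n(τ)) with n₁n₂ P(X(0)>u_n(τ)) → τ, one has P(max_{t ∈ [0,n-1]²} X(t) ≤ u_n(τ)) → e^{-τ/(1+s)}. -/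
open MeasureTheory Filter ProbabilityTheory

/-- The max-moving average field with local interaction on `ℤ²`:
`X(t) = max{Z(t), b·Z(t-(1,1)), c·Z(t₁-1,t₂+1), e·Z(t+(1,1)), f·Z(t₁+1,t₂-1)}`,
where `b = a_{-1,-1}`, `c = a_{-1,1}`, `e = a_{1,1}`, `f = a_{1,-1}`. -/
noncomputable def mma {Ω : Type*} (Z : ℤ × ℤ → Ω → ℝ) (b c e f : ℝ)
    (t : ℤ × ℤ) (ω : Ω) : ℝ :=
  max (Z t ω) (max (b * Z (t.1 - 1, t.2 - 1) ω) (max (c * Z (t.1 - 1, t.2 + 1) ω)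
    (max (e * Z (t.1 + 1, t.2 + 1) ω) (f * Z (t.1 + 1, t.2 - 1) ω))))

/-- `t` lies in the rectangle `[0 : r - 1]²`. -/
def inBox (r : ℕ × ℕ) (t : ℤ × ℤ) : Prop :=
  0 ≤ t.1 ∧ t.1 < (r.1 : ℤ) ∧ 0 ≤ t.2 ∧ t.2 < (r.2 : ℤ)

/-- The corner of the rectangle `[0 : r-1]²` indexed by `i ∈ {0,1}²`. -/
def corner (r : ℕ × ℕ) (i : Bool × Bool) : ℤ × ℤ :=
  (if i.1 then (r.1 : ℤ) - 1 else 0, if i.2 then (r.2 : ℤ) - 1 else 0)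

/-- The random field `X` has run extremal index `θ` with respect to the corner `i`. -/
def HasRunIndex {Ω : Type*} [MeasurableSpace Ω] (μ : Measure Ω)
    (X : ℤ × ℤ → Ω → ℝ) (i : Bool × Bool) (θ : ℝ) : Prop :=
  ∃ r : ℕ × ℕ → ℕ × ℕ, Tendsto r atTop atTop ∧
    Tendsto (fun n : ℕ × ℕ => ((r n).1 : ℝ) / (n.1 : ℝ)) atTop (nhds 0) ∧
    Tendsto (fun n : ℕ × ℕ => ((r n).2 : ℝ) / (n.2 : ℝ)) atTop (nhds 0) ∧
    ∀ τ : ℝ, 0 < τ → ∀ u : ℕ × ℕ → ℝ,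
      Tendsto (fun n : ℕ × ℕ =>
          (n.1 * n.2 : ℝ) * (μ {ω | u n < X (0, 0) ω}).toReal) atTop (nhds τ) →
      Tendsto (fun n : ℕ × ℕ =>
          (μ ({ω | ∀ t : ℤ × ℤ, inBox (r n) t → t ≠ corner (r n) i → X t ω ≤ u n} ∩
              {ω | u n < X (corner (r n) i) ω})).toReal /
            (μ {ω | u n < X (corner (r n) i) ω}).toReal)
        atTop (nhds θ)

namespace Stmt9Aux

instance (n : ℕ × ℕ) (t : ℤ × ℤ) : Decidable (inBox n t) := by
  unfold inBox; infer_instance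

/-- The effective weight attached to the innovation `Z t` when bounding the maximum
of the field over the box `[0:n-1]²`. -/
noncomputable def Wt (n : ℕ × ℕ) (b c e f : ℝ) (t : ℤ × ℤ) : ℝ :=
  max (if inBox n t then (1:ℝ) else 0)
    (max (if inBox n (t.1 + 1, t.2 + 1) then b else 0)
      (max (if inBox n (t.1 + 1, t.2 - 1) then c else 0)
        (max (if inBox n (t.1 - 1, t.2 - 1) then e else 0)
          (if inBox n (t.1 - 1, t.2 + 1) then f else 0))))

/-- The set of innovations influencing the box `[0:n-1]²`. -/
noncomputable def Sfin (n : ℕ × ℕ) : Finset (ℤ × ℤ) :=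
  (Finset.Icc (-1 : ℤ) n.1) ×ˢ (Finset.Icc (-1 : ℤ) n.2)

lemma mem_Sfin {n : ℕ × ℕ} {t : ℤ × ℤ} :
    t ∈ Sfin n ↔ (-1 ≤ t.1 ∧ t.1 ≤ (n.1 : ℤ)) ∧ (-1 ≤ t.2 ∧ t.2 ≤ (n.2 : ℤ)) := by
  simp [Sfin, Finset.mem_product, Finset.mem_Icc]

lemma Wt_nonneg {n : ℕ × ℕ} {b c e f : ℝ} (hb : 0 ≤ b) (hc : 0 ≤ c) (he : 0 ≤ e)
    (hf : 0 ≤ f) (t : ℤ × ℤ) : 0 ≤ Wt n b c e f t := by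
  refine le_trans ?_ (le_max_left _ _); split <;> norm_num

lemma Wt_le_one {n : ℕ × ℕ} {b c e f : ℝ} (hb : b ≤ 1) (hc : c ≤ 1) (he : e ≤ 1)
    (hf : f ≤ 1) (t : ℤ × ℤ) : Wt n b c e f t ≤ 1 := by
  unfold Wt
  refine max_le ?_ (max_le ?_ (max_le ?_ (max_le ?_ ?_))) <;> split <;> norm_num <;> assumption

lemma one_le_Wt {n : ℕ × ℕ} {b c e f : ℝ} {t : ℤ × ℤ} (h : inBox n t) :
    1 ≤ Wt n b c e f t := by
  refine le_trans ?_ (le_max_left _ _); rw [if_pos h]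

lemma max_mul_le {a b z u : ℝ} (ha : a * z ≤ u) (hb : b * z ≤ u) : max a b * z ≤ u := by
  rcases max_choice a b with h | h <;> rw [h] <;> assumption

lemma mul_le_of_le_w {a w z u : ℝ} (ha : 0 ≤ a) (haw : a ≤ w) (hu : 0 < u)
    (h : w * z ≤ u) : a * z ≤ u := by
  rcases le_or_gt z 0 with hz | hz
  · exact le_trans (mul_nonpos_of_nonneg_of_nonpos ha hz) hu.le
  · exact le_trans (mul_le_mul_of_nonneg_right haw hz.le) h

/-- The key combinatorial identity: the event that the field is small on the whole box
is exactly the event that every innovation is small relative to its effective weight. -/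
lemma event_eq {Ω : Type*} (Z : ℤ × ℤ → Ω → ℝ) {b c e f u : ℝ}
    (hb : 0 ≤ b) (hc : 0 ≤ c) (he : 0 ≤ e) (hf : 0 ≤ f) (hu : 0 < u) (n : ℕ × ℕ) :
    {ω | ∀ t : ℤ × ℤ, inBox n t → mma Z b c e f t ω ≤ u} =
      ⋂ t ∈ Sfin n, Z t ⁻¹' {x | Wt n b c e f t * x ≤ u} := by
  ext ω
  simp only [Set.mem_setOf_eq, Set.mem_iInter, Set.mem_preimage]
  constructor
  · intro H t ht
    have h0 : (if inBox n t then (1:ℝ) else 0) * Z t ω ≤ u := by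
      split_ifs with h
      · rw [one_mul]
        exact le_trans (le_max_left _ _) (H t h)
      · simpa using hu.le
    have h1 : (if inBox n (t.1 + 1, t.2 + 1) then b else 0) * Z t ω ≤ u := by
      split_ifs with h
      · have := H _ h
        unfold mma at this
        simp only [add_sub_cancel_right] at this
        exact le_trans (le_trans (le_max_left _ _) (le_max_right _ _)) this
      · simpa using hu.le
    have h2 : (if inBox n (t.1 + 1, t.2 - 1) then c else 0) * Z t ω ≤ u := by
      split_ifs with h
      · have := H _ h
        unfold mma at this
        simp only [add_sub_cancel_right, sub_add_cancel] at this
        exact le_trans (le_trans (le_max_left _ _)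
          (le_trans (le_max_right _ _) (le_max_right _ _))) this
      · simpa using hu.le
    have h3 : (if inBox n (t.1 - 1, t.2 - 1) then e else 0) * Z t ω ≤ u := by
      split_ifs with h
      · have := H _ h
        unfold mma at this
        simp only [sub_add_cancel] at this
        exact le_trans (le_trans (le_max_left _ _)
          (le_trans (le_max_right _ _) (le_trans (le_max_right _ _) (le_max_right _ _)))) this
      · simpa using hu.le
    have h4 : (if inBox n (t.1 - 1, t.2 + 1) then f else 0) * Z t ω ≤ u := by
      split_ifs with h
      · have := H _ h
        unfold mma at this
        simp only [sub_add_cancel, add_sub_cancel_right] at this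
        exact le_trans (le_trans (le_max_right _ _)
          (le_trans (le_max_right _ _) (le_trans (le_max_right _ _) (le_max_right _ _)))) this
      · simpa using hu.le
    exact max_mul_le h0 (max_mul_le h1 (max_mul_le h2 (max_mul_le h3 h4)))
  · intro H t ht
    obtain ⟨ht1, ht2, ht3, ht4⟩ := ht
    unfold mma
    refine max_le ?_ (max_le ?_ (max_le ?_ (max_le ?_ ?_)))
    · have hmem : t ∈ Sfin n := mem_Sfin.mpr ⟨⟨by omega, by omega⟩, ⟨by omega, by omega⟩⟩
      have hW : (1:ℝ) ≤ Wt n b c e f t := one_le_Wt ⟨ht1, ht2, ht3, ht4⟩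
      have := mul_le_of_le_w zero_le_one hW hu (H t hmem)
      simpa using this
    · have hmem : ((t.1 - 1, t.2 - 1) : ℤ × ℤ) ∈ Sfin n :=
        mem_Sfin.mpr ⟨⟨by omega, by omega⟩, ⟨by omega, by omega⟩⟩
      have hW : b ≤ Wt n b c e f (t.1 - 1, t.2 - 1) := by
        refine le_trans ?_ (le_trans (le_max_left _ _) (le_max_right _ _))
        rw [if_pos]
        show inBox n (t.1 - 1 + 1, t.2 - 1 + 1)
        exact ⟨by simpa using ht1, by simpa using ht2, by simpa using ht3, by simpa using ht4⟩
      exact mul_le_of_le_w hb hW hu (H _ hmem)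
    · have hmem : ((t.1 - 1, t.2 + 1) : ℤ × ℤ) ∈ Sfin n :=
        mem_Sfin.mpr ⟨⟨by omega, by omega⟩, ⟨by omega, by omega⟩⟩
      have hW : c ≤ Wt n b c e f (t.1 - 1, t.2 + 1) := by
        refine le_trans ?_ (le_trans (le_trans (le_max_left _ _) (le_max_right _ _))
          (le_max_right _ _))
        rw [if_pos]
        show inBox n (t.1 - 1 + 1, t.2 + 1 - 1)
        exact ⟨by simpa using ht1, by simpa using ht2, by simpa using ht3, by simpa using ht4⟩
      exact mul_le_of_le_w hc hW hu (H _ hmem)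
    · have hmem : ((t.1 + 1, t.2 + 1) : ℤ × ℤ) ∈ Sfin n :=
        mem_Sfin.mpr ⟨⟨by omega, by omega⟩, ⟨by omega, by omega⟩⟩
      have hW : e ≤ Wt n b c e f (t.1 + 1, t.2 + 1) := by
        refine le_trans ?_ (le_trans (le_trans (le_trans (le_max_left _ _) (le_max_right _ _))
          (le_max_right _ _)) (le_max_right _ _))
        rw [if_pos]
        show inBox n (t.1 + 1 - 1, t.2 + 1 - 1)
        exact ⟨by simpa using ht1, by simpa using ht2, by simpa using ht3, by simpa using ht4⟩
      exact mul_le_of_le_w he hW hu (H _ hmem)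
    · have hmem : ((t.1 + 1, t.2 - 1) : ℤ × ℤ) ∈ Sfin n :=
        mem_Sfin.mpr ⟨⟨by omega, by omega⟩, ⟨by omega, by omega⟩⟩
      have hW : f ≤ Wt n b c e f (t.1 + 1, t.2 - 1) := by
        refine le_trans ?_ (le_trans (le_trans (le_trans (le_max_right _ _)
          (le_max_right _ _)) (le_max_right _ _)) (le_max_right _ _))
        rw [if_pos]
        show inBox n (t.1 + 1 - 1, t.2 - 1 + 1)
        exact ⟨by simpa using ht1, by simpa using ht2, by simpa using ht3, by simpa using ht4⟩
      exact mul_le_of_le_w hf hW hu (H _ hmem)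

section Measure

variable {Ω : Type*} [MeasurableSpace Ω] (μ : Measure Ω) [IsProbabilityMeasure μ]
  (Z : ℤ × ℤ → Ω → ℝ)

lemma meas_single
    (hfrechet : ∀ (t : ℤ × ℤ) (v : ℝ), 0 < v →
      μ {ω | Z t ω ≤ v} = ENNReal.ofReal (Real.exp (-(1 / v))))
    (t : ℤ × ℤ) (w u : ℝ) (hw : 0 ≤ w) (hu : 0 < u) :
    μ (Z t ⁻¹' {x | w * x ≤ u}) = ENNReal.ofReal (Real.exp (-(w / u))) := by
  rcases eq_or_lt_of_le hw with h | h
  · have hset : {x : ℝ | w * x ≤ u} = Set.univ := by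
      ext x; simp [← h, hu.le]
    rw [hset]
    simp [← h]
  · have hset : {x : ℝ | w * x ≤ u} = Set.Iic (u / w) := by
      ext x
      simp only [Set.mem_setOf_eq, Set.mem_Iic]
      rw [le_div_iff₀ h, mul_comm]
    rw [hset, show Z t ⁻¹' Set.Iic (u / w) = {ω | Z t ω ≤ u / w} from rfl,
      hfrechet t (u / w) (div_pos hu h), one_div_div]

lemma meas_box
    (hind : iIndepFun Z μ)
    (hfrechet : ∀ (t : ℤ × ℤ) (v : ℝ), 0 < v →
      μ {ω | Z t ω ≤ v} = ENNReal.ofReal (Real.exp (-(1 / v))))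
    {b c e f u : ℝ} (hb : 0 ≤ b) (hc : 0 ≤ c) (he : 0 ≤ e) (hf : 0 ≤ f) (hu : 0 < u)
    (n : ℕ × ℕ) :
    μ {ω | ∀ t : ℤ × ℤ, inBox n t → mma Z b c e f t ω ≤ u} =
      ENNReal.ofReal (Real.exp (-((∑ t ∈ Sfin n, Wt n b c e f t) / u))) := by
  rw [event_eq Z hb hc he hf hu n]
  rw [hind.meas_biInter (fun t _ => ⟨{x | Wt n b c e f t * x ≤ u},
    measurableSet_le (measurable_id.const_mul _) measurable_const, rfl⟩)]
  rw [Finset.prod_congr rfl fun t _ =>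
    meas_single μ Z hfrechet t _ u (Wt_nonneg hb hc he hf t) hu]
  rw [← ENNReal.ofReal_prod_of_nonneg fun t _ => (Real.exp_pos _).le]
  congr 1
  rw [← Real.exp_sum]
  congr 1
  rw [Finset.sum_div, ← Finset.sum_neg_distrib]

end Measure

lemma sum_lower {n : ℕ × ℕ} {b c e f : ℝ} (hb : 0 ≤ b) (hc : 0 ≤ c) (he : 0 ≤ e)
    (hf : 0 ≤ f) : (n.1 * n.2 : ℝ) ≤ ∑ t ∈ Sfin n, Wt n b c e f t := by
  set Bx : Finset (ℤ × ℤ) := (Finset.Ico (0:ℤ) n.1) ×ˢ (Finset.Ico (0:ℤ) n.2) with hBx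
  have hcard : Bx.card = n.1 * n.2 := by
    rw [hBx, Finset.card_product, Int.card_Ico, Int.card_Ico]
    simp
  have hsub : Bx ⊆ Sfin n := by
    intro t ht
    rw [hBx, Finset.mem_product, Finset.mem_Ico, Finset.mem_Ico] at ht
    exact mem_Sfin.mpr ⟨⟨by omega, by omega⟩, ⟨by omega, by omega⟩⟩
  calc (n.1 * n.2 : ℝ) = ∑ _t ∈ Bx, (1:ℝ) := by
        rw [Finset.sum_const, hcard, nsmul_eq_mul, mul_one]; push_cast; ring
    _ ≤ ∑ t ∈ Bx, Wt n b c e f t := by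
        refine Finset.sum_le_sum fun t ht => ?_
        rw [hBx, Finset.mem_product, Finset.mem_Ico, Finset.mem_Ico] at ht
        exact one_le_Wt ⟨ht.1.1, ht.1.2, ht.2.1, ht.2.2⟩
    _ ≤ ∑ t ∈ Sfin n, Wt n b c e f t :=
        Finset.sum_le_sum_of_subset_of_nonneg hsub fun t _ _ => Wt_nonneg hb hc he hf t

lemma sum_upper {n : ℕ × ℕ} {b c e f : ℝ} (hb : b ≤ 1) (hc : c ≤ 1) (he : e ≤ 1)
    (hf : f ≤ 1) : ∑ t ∈ Sfin n, Wt n b c e f t ≤ ((n.1 + 2) * (n.2 + 2) : ℝ) := by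
  have hcard : (Sfin n).card = (n.1 + 2) * (n.2 + 2) := by
    rw [Sfin, Finset.card_product, Int.card_Icc, Int.card_Icc]
    have h1 : ((n.1 : ℤ) + 1 - (-1)).toNat = n.1 + 2 := by omega
    have h2 : ((n.2 : ℤ) + 1 - (-1)).toNat = n.2 + 2 := by omega
    rw [h1, h2]
  calc ∑ t ∈ Sfin n, Wt n b c e f t ≤ ∑ _t ∈ Sfin n, (1:ℝ) :=
        Finset.sum_le_sum fun t _ => Wt_le_one hb hc he hf t
    _ = ((n.1 + 2) * (n.2 + 2) : ℝ) := by
        rw [Finset.sum_const, hcard, nsmul_eq_mul, mul_one]; push_cast; ring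

lemma sum_one {b c e f : ℝ} (hb : 0 ≤ b) (hc : 0 ≤ c) (he : 0 ≤ e) (hf : 0 ≤ f) :
    ∑ t ∈ Sfin (1,1), Wt (1,1) b c e f t = 1 + (b + c + e + f) := by
  have h9 : Sfin (1,1) = ({(-1,-1),(-1,0),(-1,1),(0,-1),(0,0),(0,1),(1,-1),(1,0),(1,1)} :
      Finset (ℤ × ℤ)) := by decide
  rw [h9]
  rw [Finset.sum_insert (by decide), Finset.sum_insert (by decide),
    Finset.sum_insert (by decide), Finset.sum_insert (by decide),
    Finset.sum_insert (by decide), Finset.sum_insert (by decide),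
    Finset.sum_insert (by decide), Finset.sum_insert (by decide), Finset.sum_singleton]
  norm_num [Wt, inBox]
  rw [max_eq_left hb, max_eq_left hc, max_eq_left he, max_eq_right hf]
  ring

lemma box_one {Ω : Type*} (Z : ℤ × ℤ → Ω → ℝ) (b c e f u : ℝ) :
    {ω | ∀ t : ℤ × ℤ, inBox (1,1) t → mma Z b c e f t ω ≤ u} =
      {ω | mma Z b c e f (0, 0) ω ≤ u} := by
  ext ω
  simp only [Set.mem_setOf_eq]
  constructor
  · intro h
    exact h (0,0) (by constructor <;> simp)
  · intro h t ht
    have : t = ((0:ℤ), (0:ℤ)) := by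
      obtain ⟨x, y⟩ := t
      obtain ⟨h1, h2, h3, h4⟩ := ht
      simp only [Nat.cast_one] at h2 h4
      have : x = 0 := by omega
      have : y = 0 := by omega
      simp_all
    rw [this]
    exact h

end Stmt9Aux

open Stmt9Aux in
/-- The classical extremal index of the max-moving average field equals `1/(1+s)`:
for any array `u` with `n₁ n₂ P(X(0) > u_n) → τ`,
`P(max_{t ∈ [0:n-1]²} X(t) ≤ u_n) → exp(-τ/(1+s))`. -/
theorem stmt_9 {Ω : Type*} [MeasurableSpace Ω] (μ : Measure Ω) [IsProbabilityMeasure μ]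
    (Z : ℤ × ℤ → Ω → ℝ) (hmeas : ∀ t, Measurable (Z t))
    (hind : iIndepFun Z μ)
    (hfrechet : ∀ (t : ℤ × ℤ) (v : ℝ), 0 < v →
      μ {ω | Z t ω ≤ v} = ENNReal.ofReal (Real.exp (-(1 / v))))
    (b c e f : ℝ) (hb : b ∈ Set.Icc (0:ℝ) 1) (hc : c ∈ Set.Icc (0:ℝ) 1)
    (he : e ∈ Set.Icc (0:ℝ) 1) (hf : f ∈ Set.Icc (0:ℝ) 1)
    (τ : ℝ) (hτ : 0 < τ) (u : ℕ × ℕ → ℝ)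
    (hu : Tendsto (fun n : ℕ × ℕ =>
        (n.1 * n.2 : ℝ) * (μ {ω | u n < mma Z b c e f (0, 0) ω}).toReal) atTop (nhds τ)) :
    Tendsto (fun n : ℕ × ℕ =>
        (μ {ω | ∀ t : ℤ × ℤ, inBox n t → mma Z b c e f t ω ≤ u n}).toReal)
      atTop (nhds (Real.exp (-(τ / (1 + (b + c + e + f)))))) := by
  obtain ⟨hb0, hb1⟩ := hb
  obtain ⟨hc0, hc1⟩ := hc
  obtain ⟨he0, he1⟩ := he
  obtain ⟨hf0, hf1⟩ := hf
  set σ : ℝ := 1 + (b + c + e + f) with hσdef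
  have hσ : 0 < σ := by positivity
  -- measurability of the field at the origin
  have hX : Measurable (mma Z b c e f (0, 0)) := by
    unfold mma
    exact (hmeas _).max (((hmeas _).const_mul b).max (((hmeas _).const_mul c).max
      (((hmeas _).const_mul e).max ((hmeas _).const_mul f))))
  -- exceedance probability formula
  have hpform : ∀ v : ℝ, 0 < v →
      (μ {ω | v < mma Z b c e f (0, 0) ω}).toReal = 1 - Real.exp (-(σ / v)) := by
    intro v hv
    have h1 : μ {ω | mma Z b c e f (0, 0) ω ≤ v} =
        ENNReal.ofReal (Real.exp (-(σ / v))) := by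
      rw [← box_one Z b c e f v, meas_box μ Z hind hfrechet hb0 hc0 he0 hf0 hv (1,1),
        sum_one hb0 hc0 he0 hf0]
    have hcompl : {ω | v < mma Z b c e f (0, 0) ω} =
        {ω | mma Z b c e f (0, 0) ω ≤ v}ᶜ := by
      ext ω; simp [not_le]
    rw [hcompl, prob_compl_eq_one_sub (measurableSet_le hX measurable_const), h1,
      ENNReal.toReal_sub_of_le (by
        rw [ENNReal.ofReal_le_one]
        exact Real.exp_le_one_iff.mpr (neg_nonpos_of_nonneg (by positivity))) ENNReal.one_ne_top,
      ENNReal.toReal_one, ENNReal.toReal_ofReal (Real.exp_nonneg _)]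
  -- notation
  set p : ℕ × ℕ → ℝ := fun n => (μ {ω | u n < mma Z b c e f (0, 0) ω}).toReal with hpdef
  -- first coordinates tend to infinity
  have hfstN : Tendsto (fun n : ℕ × ℕ => n.1) atTop atTop := by
    rw [← Filter.prod_atTop_atTop_eq]; exact tendsto_fst
  have hsndN : Tendsto (fun n : ℕ × ℕ => n.2) atTop atTop := by
    rw [← Filter.prod_atTop_atTop_eq]; exact tendsto_snd
  have hfst : Tendsto (fun n : ℕ × ℕ => (n.1 : ℝ)) atTop atTop :=
    tendsto_natCast_atTop_atTop.comp hfstN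
  have hsnd : Tendsto (fun n : ℕ × ℕ => (n.2 : ℝ)) atTop atTop :=
    tendsto_natCast_atTop_atTop.comp hsndN
  have hN : Tendsto (fun n : ℕ × ℕ => (n.1 : ℝ) * (n.2 : ℝ)) atTop atTop :=
    hfst.atTop_mul_atTop₀ hsnd
  have hNpos : ∀ᶠ n : ℕ × ℕ in atTop, (1:ℝ) ≤ (n.1 : ℝ) * (n.2 : ℝ) :=
    hN.eventually_ge_atTop 1
  -- p → 0
  have hp0 : Tendsto p atTop (nhds 0) := by
    have h1 : Tendsto (fun n : ℕ × ℕ =>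
        ((n.1 : ℝ) * (n.2 : ℝ) * p n) * ((n.1 : ℝ) * (n.2 : ℝ))⁻¹) atTop (nhds (τ * 0)) :=
      hu.mul (tendsto_inv_atTop_zero.comp hN)
    rw [mul_zero] at h1
    refine h1.congr' ?_
    filter_upwards [hNpos] with n hn
    have hne : (n.1 : ℝ) * (n.2 : ℝ) ≠ 0 := (lt_of_lt_of_le zero_lt_one hn).ne'
    field_simp
    exact mul_div_cancel_left₀ _ hne
  -- eventually u n > 1
  have hε : 0 < 1 - Real.exp (-σ) := by
    have : Real.exp (-σ) < 1 := Real.exp_lt_one_iff.mpr (neg_lt_zero.mpr hσ)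
    linarith
  have hu1 : ∀ᶠ n : ℕ × ℕ in atTop, 1 < u n := by
    filter_upwards [hp0.eventually (gt_mem_nhds hε)] with n hn
    by_contra hle
    push_neg at hle
    have hsub : {ω | (1:ℝ) < mma Z b c e f (0, 0) ω} ⊆ {ω | u n < mma Z b c e f (0, 0) ω} :=
      fun ω hω => lt_of_le_of_lt hle hω
    have hmono : (μ {ω | (1:ℝ) < mma Z b c e f (0, 0) ω}).toReal ≤ p n :=
      ENNReal.toReal_mono (measure_ne_top μ _) (measure_mono hsub)
    rw [hpform 1 one_pos] at hmono
    simp only [div_one] at hmono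
    linarith
  -- the function g
  set g : ℕ × ℕ → ℝ := fun n => σ / u n with hgdef
  have hgpos : ∀ᶠ n : ℕ × ℕ in atTop, 0 < g n := by
    filter_upwards [hu1] with n hn
    exact div_pos hσ (lt_trans one_pos hn)
  have hpeq : ∀ᶠ n : ℕ × ℕ in atTop, p n = 1 - Real.exp (-(g n)) := by
    filter_upwards [hu1] with n hn
    exact hpform (u n) (lt_trans one_pos hn)
  -- exp (-g) → 1 and g → 0
  have hexp : Tendsto (fun n : ℕ × ℕ => Real.exp (-(g n))) atTop (nhds 1) := by
    have h1 : Tendsto (fun n : ℕ × ℕ => 1 - p n) atTop (nhds (1 - 0)) :=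
      tendsto_const_nhds.sub hp0
    rw [sub_zero] at h1
    refine h1.congr' ?_
    filter_upwards [hpeq] with n hn
    rw [hn]; ring
  have hg0 : Tendsto g atTop (nhds 0) := by
    have h := ((Real.continuousAt_log one_ne_zero).tendsto.comp hexp).neg
    rw [Real.log_one, neg_zero] at h
    exact h.congr fun n => by simp [Real.log_exp]
  -- slope limit : p/g → 1
  have hderiv : HasDerivAt (fun x : ℝ => 1 - Real.exp (-x)) 1 0 := by
    have h1 : HasDerivAt (fun x : ℝ => -x) (-1) 0 := (hasDerivAt_id 0).neg
    have h2 := h1.exp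
    have h3 := h2.const_sub 1
    norm_num at h3
    exact h3
  have hslope := hasDerivAt_iff_tendsto_slope.mp hderiv
  have hgne : Tendsto g atTop (nhdsWithin (0:ℝ) {(0:ℝ)}ᶜ) := by
    rw [tendsto_nhdsWithin_iff]
    exact ⟨hg0, hgpos.mono fun n hn => Set.mem_compl_singleton_iff.mpr hn.ne'⟩
  have hratio : Tendsto (fun n : ℕ × ℕ => p n / g n) atTop (nhds 1) := by
    have h1 := hslope.comp hgne
    refine h1.congr' ?_
    filter_upwards [hpeq] with n hn
    simp only [Function.comp_apply, slope_def_field]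
    rw [hn]
    simp [div_eq_mul_inv]
  have hppos : ∀ᶠ n : ℕ × ℕ in atTop, 0 < p n := by
    filter_upwards [hpeq, hgpos] with n h1 h2
    rw [h1]
    have : Real.exp (-(g n)) < 1 := Real.exp_lt_one_iff.mpr (neg_lt_zero.mpr h2)
    linarith
  have hinv : Tendsto (fun n : ℕ × ℕ => g n / p n) atTop (nhds 1) := by
    have h1 := hratio.inv₀ one_ne_zero
    rw [inv_one] at h1
    exact h1.congr fun n => by rw [inv_div]
  -- N * g → τ
  have hNg : Tendsto (fun n : ℕ × ℕ => (n.1 : ℝ) * (n.2 : ℝ) * g n) atTop (nhds τ) := by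
    have h1 : Tendsto (fun n : ℕ × ℕ =>
        ((n.1 : ℝ) * (n.2 : ℝ) * p n) * (g n / p n)) atTop (nhds (τ * 1)) := hu.mul hinv
    rw [mul_one] at h1
    refine h1.congr' ?_
    filter_upwards [hppos] with n hn
    rw [mul_assoc, mul_comm (p n), mul_assoc, div_mul_cancel₀ _ hn.ne']
    ring
  -- N / u → τ / σ
  have hNu : Tendsto (fun n : ℕ × ℕ => (n.1 : ℝ) * (n.2 : ℝ) / u n) atTop (nhds (τ / σ)) := by
    have h1 := hNg.div_const σ
    refine h1.congr' ?_
    filter_upwards [hu1] with n hn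
    have hune : u n ≠ 0 := (lt_trans one_pos hn).ne'
    field_simp [hgdef]
    simp only [hgdef]
    rw [mul_assoc, div_mul_cancel₀ _ hune]
  -- upper bound sequence
  have hq1 : Tendsto (fun n : ℕ × ℕ => ((n.1 : ℝ) + 2) / (n.1 : ℝ)) atTop (nhds 1) := by
    have h1 : Tendsto (fun n : ℕ × ℕ => 1 + 2 * ((n.1 : ℝ))⁻¹) atTop (nhds (1 + 2 * 0)) :=
      tendsto_const_nhds.add ((tendsto_inv_atTop_zero.comp hfst).const_mul 2)
    norm_num at h1
    refine h1.congr' ?_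
    filter_upwards [hfst.eventually_ge_atTop 1] with n hn
    have : (n.1 : ℝ) ≠ 0 := (lt_of_lt_of_le zero_lt_one hn).ne'
    field_simp
  have hq2 : Tendsto (fun n : ℕ × ℕ => ((n.2 : ℝ) + 2) / (n.2 : ℝ)) atTop (nhds 1) := by
    have h1 : Tendsto (fun n : ℕ × ℕ => 1 + 2 * ((n.2 : ℝ))⁻¹) atTop (nhds (1 + 2 * 0)) :=
      tendsto_const_nhds.add ((tendsto_inv_atTop_zero.comp hsnd).const_mul 2)
    norm_num at h1
    refine h1.congr' ?_
    filter_upwards [hsnd.eventually_ge_atTop 1] with n hn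
    have : (n.2 : ℝ) ≠ 0 := (lt_of_lt_of_le zero_lt_one hn).ne'
    field_simp
  have hupper : Tendsto (fun n : ℕ × ℕ => ((n.1 : ℝ) + 2) * ((n.2 : ℝ) + 2) / u n)
      atTop (nhds (τ / σ)) := by
    have h1 : Tendsto (fun n : ℕ × ℕ =>
        ((n.1 : ℝ) * (n.2 : ℝ) / u n) * (((n.1 : ℝ) + 2) / (n.1 : ℝ)) *
          (((n.2 : ℝ) + 2) / (n.2 : ℝ))) atTop (nhds (τ / σ * 1 * 1)) :=
      (hNu.mul hq1).mul hq2
    rw [mul_one, mul_one] at h1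
    refine h1.congr' ?_
    filter_upwards [hfst.eventually_ge_atTop 1, hsnd.eventually_ge_atTop 1, hu1]
      with n h1' h2' h3'
    have e1 : (n.1 : ℝ) ≠ 0 := (lt_of_lt_of_le zero_lt_one h1').ne'
    have e2 : (n.2 : ℝ) ≠ 0 := (lt_of_lt_of_le zero_lt_one h2').ne'
    have e3 : u n ≠ 0 := (lt_trans one_pos h3').ne'
    field_simp
  -- the exponent sequence converges by squeezing
  set E : ℕ × ℕ → ℝ := fun n => ∑ t ∈ Sfin n, Wt n b c e f t with hEdef
  have hEu : Tendsto (fun n : ℕ × ℕ => E n / u n) atTop (nhds (τ / σ)) := by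
    refine tendsto_of_tendsto_of_tendsto_of_le_of_le' hNu hupper ?_ ?_
    · filter_upwards [hu1] with n hn
      have hupos : 0 < u n := lt_trans one_pos hn
      exact div_le_div_of_nonneg_right (sum_lower hb0 hc0 he0 hf0) hupos.le
    · filter_upwards [hu1] with n hn
      have hupos : 0 < u n := lt_trans one_pos hn
      exact div_le_div_of_nonneg_right (sum_upper hb1 hc1 he1 hf1) hupos.le
  -- conclude
  have hfinal : Tendsto (fun n : ℕ × ℕ => Real.exp (-(E n / u n))) atTop
      (nhds (Real.exp (-(τ / σ)))) :=
    (Real.continuous_exp.tendsto _).comp hEu.neg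
  refine hfinal.congr' ?_
  filter_upwards [hu1] with n hn
  have hupos : 0 < u n := lt_trans one_pos hn
  rw [meas_box μ Z hind hfrechet hb0 hc0 he0 hf0 hupos n,
    ENNReal.toReal_ofReal (Real.exp_nonneg _)]
end

section
/- For the max-moving average field X on Z² with i.i.d. Fréchet(1) innovations and weights a_{-1,-1},a_{-1,1},a_{1,1},a_{1,-1} ∈ [0,1], the run extremal index with respect to the corner 0 exists and equals θ_run,0 = 1 − (1+s)^{-1}[a_{-1,-1} + min(a_{-1,1},a_{-1,-1}) + a_{1,1} + min(a_{1,-1},a_{-1,-1})], where s = a_{-1,-1}+a_{-1,1}+a_{1,1}+a_{1,-1}. -/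
open MeasureTheory Filter ProbabilityTheory

namespace Stmt10


noncomputable def W (b c e f : ℝ) (T : Finset (ℤ × ℤ)) (s : ℤ × ℤ) : ℝ :=
  max (if s ∈ T then (1:ℝ) else 0)
    (max (if (s.1 + 1, s.2 + 1) ∈ T then b else 0)
      (max (if (s.1 + 1, s.2 - 1) ∈ T then c else 0)
        (max (if (s.1 - 1, s.2 - 1) ∈ T then e else 0)
          (if (s.1 - 1, s.2 + 1) ∈ T then f else 0))))

def NS (T : Finset (ℤ × ℤ)) : Finset (ℤ × ℤ) :=
  ((((T ∪ T.image fun t => (t.1 - 1, t.2 - 1)) ∪ T.image fun t => (t.1 - 1, t.2 + 1)) ∪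
      T.image fun t => (t.1 + 1, t.2 + 1)) ∪ T.image fun t => (t.1 + 1, t.2 - 1))

variable {b c e f : ℝ}

lemma W_nonneg (T : Finset (ℤ × ℤ)) (s : ℤ × ℤ) : 0 ≤ W b c e f T s := by
  unfold W
  have h1 : (0:ℝ) ≤ if s ∈ T then (1:ℝ) else 0 := by positivity
  exact le_trans h1 (le_max_left _ _)

lemma one_le_W {T : Finset (ℤ × ℤ)} {t : ℤ × ℤ} (ht : t ∈ T) : 1 ≤ W b c e f T t := by
  unfold W; rw [if_pos ht]; exact le_max_left _ _

lemma b_le_W {T : Finset (ℤ × ℤ)} {s : ℤ × ℤ} (ht : (s.1 + 1, s.2 + 1) ∈ T) :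
    b ≤ W b c e f T s := by
  unfold W; rw [if_pos ht]
  exact le_trans (le_max_left _ _) (le_max_right _ _)

lemma c_le_W {T : Finset (ℤ × ℤ)} {s : ℤ × ℤ} (ht : (s.1 + 1, s.2 - 1) ∈ T) :
    c ≤ W b c e f T s := by
  unfold W; rw [if_pos ht]
  exact le_trans (le_trans (le_max_left _ _) (le_max_right _ _)) (le_max_right _ _)

lemma e_le_W {T : Finset (ℤ × ℤ)} {s : ℤ × ℤ} (ht : (s.1 - 1, s.2 - 1) ∈ T) :
    e ≤ W b c e f T s := by
  unfold W; rw [if_pos ht]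
  exact le_trans (le_trans (le_trans (le_max_left _ _) (le_max_right _ _)) (le_max_right _ _))
    (le_max_right _ _)

lemma f_le_W {T : Finset (ℤ × ℤ)} {s : ℤ × ℤ} (ht : (s.1 - 1, s.2 + 1) ∈ T) :
    f ≤ W b c e f T s := by
  unfold W; rw [if_pos ht]
  exact le_trans (le_trans (le_trans (le_trans (le_max_right _ _) (le_max_right _ _))
    (le_max_right _ _)) (le_max_right _ _)) le_rfl

lemma mul_le_of_W {a w z u : ℝ} (ha : 0 ≤ a) (haw : a ≤ w) (h : w * z ≤ u) (hu : 0 ≤ u) :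
    a * z ≤ u := by
  rcases le_or_gt z 0 with hz | hz
  · exact le_trans (mul_nonpos_of_nonneg_of_nonpos ha hz) hu
  · exact le_trans (mul_le_mul_of_nonneg_right haw hz.le) h

lemma forall_mma_iff {Ω : Type*} (Z : ℤ × ℤ → Ω → ℝ)
    (hb : 0 ≤ b) (hc : 0 ≤ c) (he : 0 ≤ e) (hf : 0 ≤ f)
    {T S : Finset (ℤ × ℤ)} (hTS : NS T ⊆ S) {u : ℝ} (hu : 0 < u) (ω : Ω) :
    (∀ t ∈ T, mma Z b c e f t ω ≤ u) ↔ (∀ s ∈ S, W b c e f T s * Z s ω ≤ u) := by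
  constructor
  · intro H s _
    rcases le_or_gt (Z s ω) 0 with hz | hz
    · exact le_trans (mul_nonpos_of_nonneg_of_nonpos (W_nonneg _ _) hz) hu.le
    · unfold W
      rw [max_mul_of_nonneg _ _ hz.le, max_mul_of_nonneg _ _ hz.le,
        max_mul_of_nonneg _ _ hz.le, max_mul_of_nonneg _ _ hz.le]
      have hifmul : ∀ (P : Prop) (inst : Decidable P) (x z : ℝ),
          (if P then x else 0) * z = if P then x * z else 0 := by
        intro P inst x z; split <;> simp
      rw [hifmul, hifmul, hifmul, hifmul, hifmul]
      refine max_le ?_ (max_le ?_ (max_le ?_ (max_le ?_ ?_))) <;> (split <;> [skip; exact hu.le])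
      · rename_i hmem
        calc (1:ℝ) * Z s ω = Z s ω := one_mul _
        _ ≤ mma Z b c e f s ω := le_max_left _ _
        _ ≤ u := H s hmem
      · rename_i hmem
        have h2 : b * Z ((s.1+1) - 1, (s.2+1) - 1) ω ≤ mma Z b c e f (s.1+1, s.2+1) ω :=
          le_trans (le_max_left _ _) (le_max_right _ _)
        simpa using le_trans h2 (H _ hmem)
      · rename_i hmem
        have h2 : c * Z ((s.1+1) - 1, (s.2-1) + 1) ω ≤ mma Z b c e f (s.1+1, s.2-1) ω :=
          le_trans (le_trans (le_max_left _ _) (le_max_right _ _)) (le_max_right _ _)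
        simpa using le_trans h2 (H _ hmem)
      · rename_i hmem
        have h2 : e * Z ((s.1-1) + 1, (s.2-1) + 1) ω ≤ mma Z b c e f (s.1-1, s.2-1) ω :=
          le_trans (le_trans (le_trans (le_max_left _ _) (le_max_right _ _)) (le_max_right _ _))
            (le_max_right _ _)
        simpa using le_trans h2 (H _ hmem)
      · rename_i hmem
        have h2 : f * Z ((s.1-1) + 1, (s.2+1) - 1) ω ≤ mma Z b c e f (s.1-1, s.2+1) ω :=
          le_trans (le_trans (le_trans (le_trans (le_max_right _ _) (le_max_right _ _))
            (le_max_right _ _)) (le_max_right _ _)) le_rfl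
        simpa using le_trans h2 (H _ hmem)
  · intro H t ht
    refine max_le ?_ (max_le ?_ (max_le ?_ (max_le ?_ ?_)))
    · have hsS : t ∈ S := hTS (by
        exact Finset.mem_union_left _ (Finset.mem_union_left _ (Finset.mem_union_left _
          (Finset.mem_union_left _ ht))))
      have := mul_le_of_W zero_le_one (one_le_W ht) (H t hsS) hu.le
      simpa using this
    · have hsS : (t.1 - 1, t.2 - 1) ∈ S := hTS (Finset.mem_union_left _
        (Finset.mem_union_left _ (Finset.mem_union_left _ (Finset.mem_union_right _
          (Finset.mem_image_of_mem _ ht)))))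
      refine mul_le_of_W hb (b_le_W ?_) (H _ hsS) hu.le
      simpa using ht
    · have hsS : (t.1 - 1, t.2 + 1) ∈ S := hTS (Finset.mem_union_left _
        (Finset.mem_union_left _ (Finset.mem_union_right _ (Finset.mem_image_of_mem _ ht))))
      refine mul_le_of_W hc (c_le_W ?_) (H _ hsS) hu.le
      simpa using ht
    · have hsS : (t.1 + 1, t.2 + 1) ∈ S := hTS (Finset.mem_union_left _
        (Finset.mem_union_right _ (Finset.mem_image_of_mem _ ht)))
      refine mul_le_of_W he (e_le_W ?_) (H _ hsS) hu.le
      simpa using ht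
    · have hsS : (t.1 + 1, t.2 - 1) ∈ S := hTS (Finset.mem_union_right _
        (Finset.mem_image_of_mem _ ht))
      refine mul_le_of_W hf (f_le_W ?_) (H _ hsS) hu.le
      simpa using ht


variable {Ω : Type*} [MeasurableSpace Ω]

lemma meas_forall_le (μ : Measure Ω) [IsProbabilityMeasure μ]
    (Z : ℤ × ℤ → Ω → ℝ)
    (hind : iIndepFun Z μ)
    (hfrechet : ∀ (t : ℤ × ℤ) (v : ℝ), 0 < v →
      μ {ω | Z t ω ≤ v} = ENNReal.ofReal (Real.exp (-(1 / v))))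
    (S : Finset (ℤ × ℤ)) (g : ℤ × ℤ → ℝ) (hg : ∀ s, 0 ≤ g s) {u : ℝ} (hu : 0 < u) :
    μ {ω | ∀ s ∈ S, g s * Z s ω ≤ u} =
      ENNReal.ofReal (Real.exp (-(∑ s ∈ S, g s) / u)) := by
  have hset : {ω | ∀ s ∈ S, g s * Z s ω ≤ u} = ⋂ s ∈ S, Z s ⁻¹' {y | g s * y ≤ u} := by
    ext ω; simp
  have hms : ∀ s : ℤ × ℤ, s ∈ S → MeasurableSet[Real.measurableSpace.comap (Z s)]
      (Z s ⁻¹' {y | g s * y ≤ u}) := by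
    intro s _
    exact ⟨{y | g s * y ≤ u}, measurableSet_le (measurable_id.const_mul _) measurable_const, rfl⟩
  have hone : ∀ s ∈ S, μ (Z s ⁻¹' {y | g s * y ≤ u}) = ENNReal.ofReal (Real.exp (-(g s) / u)) := by
    intro s _
    rcases eq_or_lt_of_le (hg s) with h0 | hpos
    · have huniv : Z s ⁻¹' {y | g s * y ≤ u} = Set.univ := by
        ext ω; simp [← h0, hu.le]
      rw [huniv, measure_univ, ← h0]
      norm_num
    · have hv : 0 < u / g s := div_pos hu hpos
      have hIic : Z s ⁻¹' {y | g s * y ≤ u} = {ω | Z s ω ≤ u / g s} := by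
        ext ω
        simp only [Set.mem_preimage, Set.mem_setOf_eq, le_div_iff₀ hpos, mul_comm]
      rw [hIic, hfrechet s _ hv, one_div_div, neg_div]
  rw [hset, hind.meas_biInter hms, Finset.prod_congr rfl hone,
    ← ENNReal.ofReal_prod_of_nonneg (fun _ _ => (Real.exp_pos _).le), ← Real.exp_sum]
  congr 2
  rw [← Finset.sum_div, Finset.sum_neg_distrib, neg_div]


noncomputable def box (r : ℕ × ℕ) : Finset (ℤ × ℤ) :=
  Finset.Icc 0 ((r.1 : ℤ) - 1) ×ˢ Finset.Icc 0 ((r.2 : ℤ) - 1)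

noncomputable def TA (r : ℕ × ℕ) : Finset (ℤ × ℤ) := (box r).erase (0, 0)

def s₅ : Finset (ℤ × ℤ) := {(0,0), (-1,-1), (-1,1), (1,1), (1,-1)}

lemma mem_box' {r : ℕ × ℕ} {x y : ℤ} :
    (x, y) ∈ box r ↔ 0 ≤ x ∧ x < (r.1 : ℤ) ∧ 0 ≤ y ∧ y < (r.2 : ℤ) := by
  simp only [box, Finset.mem_product, Finset.mem_Icc]
  omega

lemma mem_TA' {r : ℕ × ℕ} {x y : ℤ} :
    (x, y) ∈ TA r ↔ ¬(x = 0 ∧ y = 0) ∧ (0 ≤ x ∧ x < (r.1 : ℤ) ∧ 0 ≤ y ∧ y < (r.2 : ℤ)) := by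
  rw [TA, Finset.mem_erase, mem_box']
  simp [Prod.ext_iff]

lemma NS_mono {T T' : Finset (ℤ × ℤ)} (h : T ⊆ T') : NS T ⊆ NS T' := by
  unfold NS
  gcongr <;> exact Finset.image_subset_image h

lemma W_pair (b c e f : ℝ) (T : Finset (ℤ × ℤ)) (x y : ℤ) :
    W b c e f T (x, y) =
    max (if (x, y) ∈ T then (1:ℝ) else 0)
      (max (if (x + 1, y + 1) ∈ T then b else 0)
        (max (if (x + 1, y - 1) ∈ T then c else 0)
          (max (if (x - 1, y - 1) ∈ T then e else 0)
            (if (x - 1, y + 1) ∈ T then f else 0)))) := rfl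

variable {b c e f : ℝ} {r : ℕ × ℕ}

lemma sum_box_sub (hb0 : 0 ≤ b) (hb1 : b ≤ 1) (hc0 : 0 ≤ c) (hc1 : c ≤ 1)
    (he0 : 0 ≤ e) (he1 : e ≤ 1) (hf0 : 0 ≤ f) (hf1 : f ≤ 1)
    (hr1 : 3 ≤ r.1) (hr2 : 3 ≤ r.2) :
    ∑ s ∈ NS (box r), W b c e f (box r) s =
      ∑ s ∈ NS (box r), W b c e f (TA r) s + (1 + (max b c - b) + (max b f - b)) := by
  have m00 : ((0:ℤ), (0:ℤ)) ∈ box r := by rw [mem_box']; omega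
  have hsub : s₅ ⊆ NS (box r) := by
    intro s hs
    simp only [s₅, Finset.mem_insert, Finset.mem_singleton] at hs
    rcases hs with h | h | h | h | h <;> subst h <;> unfold NS
    · exact Finset.mem_union_left _ (Finset.mem_union_left _ (Finset.mem_union_left _
        (Finset.mem_union_left _ m00)))
    · exact Finset.mem_union_left _ (Finset.mem_union_left _ (Finset.mem_union_left _
        (Finset.mem_union_right _ (Finset.mem_image.2 ⟨(0,0), m00, rfl⟩))))
    · exact Finset.mem_union_left _ (Finset.mem_union_left _
        (Finset.mem_union_right _ (Finset.mem_image.2 ⟨(0,0), m00, rfl⟩)))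
    · exact Finset.mem_union_left _
        (Finset.mem_union_right _ (Finset.mem_image.2 ⟨(0,0), m00, rfl⟩))
    · exact Finset.mem_union_right _ (Finset.mem_image.2 ⟨(0,0), m00, rfl⟩)
  have key : ∑ s ∈ NS (box r), (W b c e f (box r) s - W b c e f (TA r) s) =
      ∑ s ∈ s₅, (W b c e f (box r) s - W b c e f (TA r) s) := by
    refine (Finset.sum_subset hsub ?_).symm
    intro s _ hs
    simp only [s₅, Finset.mem_insert, Finset.mem_singleton, not_or] at hs
    obtain ⟨h1, h2, h3, h4, h5⟩ := hs
    have hif : ∀ (t : ℤ × ℤ) (x : ℝ), t ≠ ((0:ℤ), (0:ℤ)) →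
        (if t ∈ (box r).erase (0,0) then x else 0) = (if t ∈ box r then x else 0) := by
      intro t x ht
      refine if_congr ?_ rfl rfl
      rw [Finset.mem_erase]; exact and_iff_right ht
    have g2 : ((s.1 + 1, s.2 + 1) : ℤ × ℤ) ≠ (0, 0) := by
      intro hh; apply h2; rw [Prod.ext_iff] at hh ⊢; simp at hh ⊢; omega
    have g3 : ((s.1 + 1, s.2 - 1) : ℤ × ℤ) ≠ (0, 0) := by
      intro hh; apply h3; rw [Prod.ext_iff] at hh ⊢; simp at hh ⊢; omega
    have g4 : ((s.1 - 1, s.2 - 1) : ℤ × ℤ) ≠ (0, 0) := by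
      intro hh; apply h4; rw [Prod.ext_iff] at hh ⊢; simp at hh ⊢; omega
    have g5 : ((s.1 - 1, s.2 + 1) : ℤ × ℤ) ≠ (0, 0) := by
      intro hh; apply h5; rw [Prod.ext_iff] at hh ⊢; simp at hh ⊢; omega
    have congrW : W b c e f (box r) s = W b c e f (TA r) s := by
      unfold W TA
      rw [hif s _ h1, hif _ b g2, hif _ c g3, hif _ e g4, hif _ f g5]
    rw [congrW, sub_self]
  have hsum5 : ∑ s ∈ s₅, (W b c e f (box r) s - W b c e f (TA r) s) =
      (1 + (max b c - b) + (max b f - b)) := by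
    have e00b : W b c e f (box r) (0,0) = 1 := by
      rw [W_pair]
      rw [if_pos m00, if_pos (by rw [mem_box']; omega : ((0:ℤ)+1, (0:ℤ)+1) ∈ box r),
        if_neg (by rw [mem_box']; omega), if_neg (by rw [mem_box']; omega),
        if_neg (by rw [mem_box']; omega)]
      rw [max_self, max_self, max_eq_left hb0, max_eq_left hb1]
    have e00a : W b c e f (TA r) (0,0) = b := by
      rw [W_pair]
      rw [if_neg (by rw [mem_TA']; omega), if_pos (by rw [mem_TA']; omega),
        if_neg (by rw [mem_TA']; omega), if_neg (by rw [mem_TA']; omega),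
        if_neg (by rw [mem_TA']; omega)]
      rw [max_self, max_self, max_eq_left hb0, max_eq_right hb0]
    have emmb : W b c e f (box r) (-1,-1) = b := by
      rw [W_pair]
      rw [if_neg (by rw [mem_box']; omega), if_pos (by rw [mem_box']; omega),
        if_neg (by rw [mem_box']; omega), if_neg (by rw [mem_box']; omega),
        if_neg (by rw [mem_box']; omega)]
      rw [max_self, max_self, max_eq_left hb0, max_eq_right hb0]
    have emma : W b c e f (TA r) (-1,-1) = 0 := by
      rw [W_pair]
      rw [if_neg (by rw [mem_TA']; omega), if_neg (by rw [mem_TA']; omega),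
        if_neg (by rw [mem_TA']; omega), if_neg (by rw [mem_TA']; omega),
        if_neg (by rw [mem_TA']; omega)]
      simp
    have empb : W b c e f (box r) (-1,1) = max b c := by
      rw [W_pair]
      rw [if_neg (by rw [mem_box']; omega), if_pos (by rw [mem_box']; omega),
        if_pos (by rw [mem_box']; omega), if_neg (by rw [mem_box']; omega),
        if_neg (by rw [mem_box']; omega)]
      rw [max_self, max_eq_left hc0, max_eq_right (le_trans hb0 (le_max_left b c))]
    have empa : W b c e f (TA r) (-1,1) = b := by
      rw [W_pair]
      rw [if_neg (by rw [mem_TA']; omega), if_pos (by rw [mem_TA']; omega),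
        if_neg (by rw [mem_TA']; omega), if_neg (by rw [mem_TA']; omega),
        if_neg (by rw [mem_TA']; omega)]
      rw [max_self, max_self, max_eq_left hb0, max_eq_right hb0]
    have eppb : W b c e f (box r) (1,1) = 1 := by
      rw [W_pair]
      rw [if_pos (by rw [mem_box']; omega), if_pos (by rw [mem_box']; omega),
        if_pos (by rw [mem_box']; omega), if_pos (by rw [mem_box']; omega),
        if_pos (by rw [mem_box']; omega)]
      exact max_eq_left (max_le hb1 (max_le hc1 (max_le he1 hf1)))
    have eppa : W b c e f (TA r) (1,1) = 1 := by
      rw [W_pair]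
      rw [if_pos (by rw [mem_TA']; omega), if_pos (by rw [mem_TA']; omega),
        if_pos (by rw [mem_TA']; omega), if_neg (by rw [mem_TA']; omega),
        if_pos (by rw [mem_TA']; omega)]
      exact max_eq_left (max_le hb1 (max_le hc1 (max_le zero_le_one hf1)))
    have epmb : W b c e f (box r) (1,-1) = max b f := by
      rw [W_pair]
      rw [if_neg (by rw [mem_box']; omega), if_pos (by rw [mem_box']; omega),
        if_neg (by rw [mem_box']; omega), if_neg (by rw [mem_box']; omega),
        if_pos (by rw [mem_box']; omega)]
      rw [max_eq_right hf0, max_eq_right hf0, max_eq_right (le_trans hb0 (le_max_left b f))]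
    have epma : W b c e f (TA r) (1,-1) = b := by
      rw [W_pair]
      rw [if_neg (by rw [mem_TA']; omega), if_pos (by rw [mem_TA']; omega),
        if_neg (by rw [mem_TA']; omega), if_neg (by rw [mem_TA']; omega),
        if_neg (by rw [mem_TA']; omega)]
      rw [max_self, max_self, max_eq_left hb0, max_eq_right hb0]
    have hns : ∑ s ∈ s₅, (W b c e f (box r) s - W b c e f (TA r) s) =
        (W b c e f (box r) (0,0) - W b c e f (TA r) (0,0)) +
        ((W b c e f (box r) (-1,-1) - W b c e f (TA r) (-1,-1)) +
        ((W b c e f (box r) (-1,1) - W b c e f (TA r) (-1,1)) +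
        ((W b c e f (box r) (1,1) - W b c e f (TA r) (1,1)) +
        (W b c e f (box r) (1,-1) - W b c e f (TA r) (1,-1))))) := by
      rw [s₅]
      rw [Finset.sum_insert (by decide), Finset.sum_insert (by decide),
        Finset.sum_insert (by decide), Finset.sum_insert (by decide), Finset.sum_singleton]
    rw [hns, e00b, e00a, emmb, emma, empb, empa, eppb, eppa, epmb, epma]
    ring
  rw [Finset.sum_sub_distrib] at key
  linarith [key, hsum5]


lemma NS_single_subset : NS {((0:ℤ), (0:ℤ))} ⊆ s₅ := by decide

lemma sum_single (hb0 : 0 ≤ b) (hc0 : 0 ≤ c) (he0 : 0 ≤ e) (hf0 : 0 ≤ f) :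
    ∑ s ∈ s₅, W b c e f {((0:ℤ), (0:ℤ))} s = 1 + b + c + e + f := by
  have e1 : W b c e f {((0:ℤ), (0:ℤ))} (0,0) = 1 := by
    rw [W_pair, if_pos (by decide), if_neg (by decide), if_neg (by decide),
      if_neg (by decide), if_neg (by decide)]
    rw [max_self, max_self, max_self, max_eq_left zero_le_one]
  have e2 : W b c e f {((0:ℤ), (0:ℤ))} (-1,-1) = b := by
    rw [W_pair, if_neg (by decide), if_pos (by decide), if_neg (by decide),
      if_neg (by decide), if_neg (by decide)]
    rw [max_self, max_self, max_eq_left hb0, max_eq_right hb0]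
  have e3 : W b c e f {((0:ℤ), (0:ℤ))} (-1,1) = c := by
    rw [W_pair, if_neg (by decide), if_neg (by decide), if_pos (by decide),
      if_neg (by decide), if_neg (by decide)]
    rw [max_self, max_eq_left hc0, max_eq_right hc0, max_eq_right hc0]
  have e4 : W b c e f {((0:ℤ), (0:ℤ))} (1,1) = e := by
    rw [W_pair, if_neg (by decide), if_neg (by decide), if_neg (by decide),
      if_pos (by decide), if_neg (by decide)]
    rw [max_eq_left he0, max_eq_right he0, max_eq_right he0, max_eq_right he0]
  have e5 : W b c e f {((0:ℤ), (0:ℤ))} (1,-1) = f := by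
    rw [W_pair, if_neg (by decide), if_neg (by decide), if_neg (by decide),
      if_neg (by decide), if_pos (by decide)]
    rw [max_eq_right hf0, max_eq_right hf0, max_eq_right hf0, max_eq_right hf0]
  rw [s₅, Finset.sum_insert (by decide), Finset.sum_insert (by decide),
    Finset.sum_insert (by decide), Finset.sum_insert (by decide), Finset.sum_singleton,
    e1, e2, e3, e4, e5]
  ring

lemma W_le_one (hb1 : b ≤ 1) (hc1 : c ≤ 1) (he1 : e ≤ 1) (hf1 : f ≤ 1)
    (T : Finset (ℤ × ℤ)) (s : ℤ × ℤ) : W b c e f T s ≤ 1 := by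
  unfold W
  have h : ∀ x : ℝ, x ≤ 1 → (∀ (P : Prop) (_ : Decidable P), (if P then x else 0) ≤ 1) := by
    intro x hx P _; split <;> linarith
  exact max_le (h 1 le_rfl _ _) (max_le (h b hb1 _ _) (max_le (h c hc1 _ _)
    (max_le (h e he1 _ _) (h f hf1 _ _))))

lemma card_box : (box r).card = r.1 * r.2 := by
  have h1 : ((r.1:ℤ) - 1 + 1 - 0).toNat = r.1 := by omega
  have h2 : ((r.2:ℤ) - 1 + 1 - 0).toNat = r.2 := by omega
  rw [box, Finset.card_product, Int.card_Icc, Int.card_Icc, h1, h2]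

lemma sum_TA_le (hb1 : b ≤ 1) (hc1 : c ≤ 1) (he1 : e ≤ 1) (hf1 : f ≤ 1) :
    ∑ s ∈ NS (box r), W b c e f (TA r) s ≤ 5 * (r.1 * r.2 : ℝ) := by
  have h1 : ∑ s ∈ NS (box r), W b c e f (TA r) s ≤ ((NS (box r)).card : ℝ) := by
    calc ∑ s ∈ NS (box r), W b c e f (TA r) s ≤ ∑ _s ∈ NS (box r), (1:ℝ) :=
      Finset.sum_le_sum fun s _ => W_le_one hb1 hc1 he1 hf1 _ _
    _ = ((NS (box r)).card : ℝ) := by simp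
  refine le_trans h1 ?_
  have h2 : (NS (box r)).card ≤ 5 * (r.1 * r.2) := by
    have hcard : ∀ g : ℤ × ℤ → ℤ × ℤ, ((box r).image g).card ≤ r.1 * r.2 := fun g =>
      le_trans (Finset.card_image_le) (le_of_eq card_box)
    calc (NS (box r)).card ≤ _ := Finset.card_union_le _ _
    _ ≤ _ + _ := add_le_add (Finset.card_union_le _ _) (hcard _)
    _ ≤ (_ + _) + _ := add_le_add (add_le_add (Finset.card_union_le _ _) (hcard _)) le_rfl
    _ ≤ ((_ + _) + _) + _ :=
      add_le_add (add_le_add (add_le_add (Finset.card_union_le _ _) (hcard _)) le_rfl) le_rfl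
    _ ≤ (((r.1 * r.2 + r.1 * r.2) + r.1 * r.2) + r.1 * r.2) + r.1 * r.2 :=
      add_le_add (add_le_add (add_le_add
        (add_le_add (le_of_eq card_box) (hcard _)) le_rfl) le_rfl) le_rfl
    _ = 5 * (r.1 * r.2) := by ring
  calc ((NS (box r)).card : ℝ) ≤ ((5 * (r.1 * r.2) : ℕ) : ℝ) := by exact_mod_cast h2
  _ = 5 * (r.1 * r.2 : ℝ) := by push_cast; ring

section Events

variable (μ : Measure Ω) [IsProbabilityMeasure μ] (Z : ℤ × ℤ → Ω → ℝ)

lemma mma_measurable (hmeas : ∀ t, Measurable (Z t)) (t : ℤ × ℤ) :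
    Measurable (mma Z b c e f t) :=
  (hmeas t).max ((((hmeas _).const_mul b)).max ((((hmeas _).const_mul c)).max
    ((((hmeas _).const_mul e)).max (((hmeas _).const_mul f)))))

variable (hmeas : ∀ t, Measurable (Z t))
  (hind : iIndepFun Z μ)
  (hfrechet : ∀ (t : ℤ × ℤ) (v : ℝ), 0 < v →
      μ {ω | Z t ω ≤ v} = ENNReal.ofReal (Real.exp (-(1 / v))))
  (hb0 : 0 ≤ b) (hb1 : b ≤ 1) (hc0 : 0 ≤ c) (hc1 : c ≤ 1)
  (he0 : 0 ≤ e) (he1 : e ≤ 1) (hf0 : 0 ≤ f) (hf1 : f ≤ 1)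

include hind hfrechet hb0 hc0 he0 hf0 in
lemma meas_event {T S : Finset (ℤ × ℤ)} (hTS : NS T ⊆ S) {u : ℝ} (hu : 0 < u) :
    μ {ω | ∀ t ∈ T, mma Z b c e f t ω ≤ u} =
      ENNReal.ofReal (Real.exp (-(∑ s ∈ S, W b c e f T s) / u)) := by
  have hset : {ω | ∀ t ∈ T, mma Z b c e f t ω ≤ u} =
      {ω | ∀ s ∈ S, W b c e f T s * Z s ω ≤ u} := by
    ext ω
    exact forall_mma_iff Z hb0 hc0 he0 hf0 hTS hu ω
  rw [hset]
  exact meas_forall_le μ Z hind hfrechet S _ (fun s => W_nonneg _ _) hu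

include hind hfrechet hb0 hc0 he0 hf0 in
lemma meas_X0_le {u : ℝ} (hu : 0 < u) :
    μ {ω | mma Z b c e f (0, 0) ω ≤ u} =
      ENNReal.ofReal (Real.exp (-(1 + b + c + e + f) / u)) := by
  have h1 : {ω | mma Z b c e f (0, 0) ω ≤ u} =
      {ω | ∀ t ∈ ({((0:ℤ), (0:ℤ))} : Finset (ℤ × ℤ)), mma Z b c e f t ω ≤ u} := by
    ext ω; simp
  rw [h1, meas_event μ Z hind hfrechet hb0 hc0 he0 hf0 NS_single_subset hu,
    sum_single hb0 hc0 he0 hf0]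

include hmeas hind hfrechet hb0 hc0 he0 hf0 in
lemma meas_X0_gt {u : ℝ} (hu : 0 < u) :
    (μ {ω | u < mma Z b c e f (0, 0) ω}).toReal =
      1 - Real.exp (-(1 + b + c + e + f) / u) := by
  have hms : MeasurableSet {ω | mma Z b c e f (0, 0) ω ≤ u} :=
    measurableSet_le (mma_measurable Z hmeas _) measurable_const
  have hset : {ω | u < mma Z b c e f (0, 0) ω} = {ω | mma Z b c e f (0, 0) ω ≤ u}ᶜ := by
    ext ω; simp [not_le]
  have hexp1 : Real.exp (-(1 + b + c + e + f) / u) ≤ 1 := by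
    rw [Real.exp_le_one_iff]
    rw [neg_div, neg_nonpos]
    positivity
  rw [hset, prob_compl_eq_one_sub hms, meas_X0_le μ Z hind hfrechet hb0 hc0 he0 hf0 hu,
    ENNReal.toReal_sub_of_le (ENNReal.ofReal_le_one.2 hexp1) (by simp)]
  simp [ENNReal.toReal_ofReal (Real.exp_pos _).le]

include hmeas hind hfrechet hb0 hb1 hc0 hc1 he0 he1 hf0 hf1 in
lemma meas_num {u : ℝ} (hu : 0 < u) (hr1 : 3 ≤ r.1) (hr2 : 3 ≤ r.2) :
    (μ ({ω | ∀ t ∈ TA r, mma Z b c e f t ω ≤ u} ∩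
        {ω | u < mma Z b c e f (0, 0) ω})).toReal =
      Real.exp (-(∑ s ∈ NS (box r), W b c e f (TA r) s) / u) -
        Real.exp (-(∑ s ∈ NS (box r), W b c e f (TA r) s +
          (1 + (max b c - b) + (max b f - b))) / u) := by
  have m00 : ((0:ℤ), (0:ℤ)) ∈ box r := by rw [mem_box']; omega
  set A := {ω | ∀ t ∈ TA r, mma Z b c e f t ω ≤ u} with hA
  set C := {ω | mma Z b c e f (0, 0) ω ≤ u} with hC
  have hmsC : MeasurableSet C :=
    measurableSet_le (mma_measurable Z hmeas _) measurable_const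
  have hACset : A ∩ C = {ω | ∀ t ∈ box r, mma Z b c e f t ω ≤ u} := by
    ext ω
    simp only [hA, hC, Set.mem_inter_iff, Set.mem_setOf_eq]
    rw [← Finset.insert_erase m00, Finset.forall_mem_insert]
    exact ⟨fun ⟨ha, hc⟩ => ⟨hc, ha⟩, fun ⟨hc, ha⟩ => ⟨ha, hc⟩⟩
  have hmuA : μ A = ENNReal.ofReal
      (Real.exp (-(∑ s ∈ NS (box r), W b c e f (TA r) s) / u)) :=
    meas_event μ Z hind hfrechet hb0 hc0 he0 hf0
      (NS_mono (Finset.erase_subset _ _)) hu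
  have hmuAC : μ (A ∩ C) = ENNReal.ofReal
      (Real.exp (-(∑ s ∈ NS (box r), W b c e f (TA r) s +
        (1 + (max b c - b) + (max b f - b))) / u)) := by
    rw [hACset, meas_event μ Z hind hfrechet hb0 hc0 he0 hf0 (subset_refl _) hu,
      sum_box_sub hb0 hb1 hc0 hc1 he0 he1 hf0 hf1 hr1 hr2]
  have hdiff : A ∩ Cᶜ = A \ C := (Set.diff_eq A C).symm
  have hadd : μ (A ∩ C) + μ (A \ C) = μ A := measure_inter_add_diff A hmsC
  have htr : (μ (A ∩ C)).toReal + (μ (A \ C)).toReal = (μ A).toReal := by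
    rw [← ENNReal.toReal_add (measure_ne_top μ _) (measure_ne_top μ _), hadd]
  have hgt : {ω | u < mma Z b c e f (0, 0) ω} = Cᶜ := by
    ext ω; simp [hC, not_le]
  rw [hgt, hdiff]
  rw [hmuA, hmuAC, ENNReal.toReal_ofReal (Real.exp_pos _).le,
    ENNReal.toReal_ofReal (Real.exp_pos _).le] at htr
  linarith

end Events

lemma tendsto_one_sub_exp_div_self {ι : Type*} {l : Filter ι} {x : ι → ℝ}
    (hx : Tendsto x l (nhds 0)) (hxne : ∀ᶠ n in l, x n ≠ 0) :
    Tendsto (fun n => (1 - Real.exp (-x n)) / x n) l (nhds 1) := by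
  have hslope : Tendsto (slope Real.exp 0) (nhdsWithin 0 {y | y ≠ 0}) (nhds 1) := by
    have h := (Real.hasDerivAt_exp 0)
    rw [hasDerivAt_iff_tendsto_slope, Real.exp_zero] at h
    exact h
  have htn : Tendsto (fun n => -x n) l (nhdsWithin 0 {y | y ≠ 0}) := by
    rw [tendsto_nhdsWithin_iff]
    constructor
    · simpa using hx.neg
    · filter_upwards [hxne] with n hn
      simpa using hn
  have hcomp : Tendsto (fun n => slope Real.exp 0 (-x n)) l (nhds 1) := hslope.comp htn
  refine hcomp.congr' ?_
  filter_upwards [hxne] with n hn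
  rw [slope_def_field, Real.exp_zero]
  rw [sub_zero, div_neg, ← neg_div, neg_sub]

lemma tendsto_div_one_sub_exp {ι : Type*} {l : Filter ι} {x : ι → ℝ}
    (hx : Tendsto x l (nhds 0)) (hxpos : ∀ᶠ n in l, 0 < x n) :
    Tendsto (fun n => x n / (1 - Real.exp (-x n))) l (nhds 1) := by
  have h := (tendsto_one_sub_exp_div_self hx (hxpos.mono fun n h => h.ne')).inv₀ one_ne_zero
  rw [inv_one] at h
  refine h.congr fun n => ?_
  rw [inv_div]

lemma tendsto_ratio_exp {ι : Type*} {l : Filter ι} {x : ι → ℝ}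
    (hx : Tendsto x l (nhds 0)) (hxpos : ∀ᶠ n in l, 0 < x n) {κ : ℝ} (hκ : 0 < κ) :
    Tendsto (fun n => (1 - Real.exp (-(κ * x n))) / (1 - Real.exp (-x n))) l (nhds κ) := by
  have hkx : Tendsto (fun n => κ * x n) l (nhds 0) := by
    simpa using hx.const_mul κ
  have hkxpos : ∀ᶠ n in l, 0 < κ * x n := hxpos.mono fun n h => mul_pos hκ h
  have h1 : Tendsto (fun n => (1 - Real.exp (-(κ * x n))) / (κ * x n)) l (nhds 1) :=
    tendsto_one_sub_exp_div_self hkx (hkxpos.mono fun n h => h.ne')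
  have h2 : Tendsto (fun n => x n / (1 - Real.exp (-x n))) l (nhds 1) :=
    tendsto_div_one_sub_exp hx hxpos
  have h3 : Tendsto (fun n => ((1 - Real.exp (-(κ * x n))) / (κ * x n)) * κ *
      (x n / (1 - Real.exp (-x n)))) l (nhds κ) := by
    have := (h1.mul_const κ).mul h2
    simpa using this
  refine h3.congr' ?_
  filter_upwards [hxpos] with n hn
  have hB : 0 < 1 - Real.exp (-x n) := by
    have : Real.exp (-x n) < 1 := Real.exp_lt_one_iff.2 (by linarith)
    linarith
  field_simp


lemma mem_box_iff {r : ℕ × ℕ} {t : ℤ × ℤ} : t ∈ box r ↔ inBox r t := by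
  obtain ⟨x, y⟩ := t
  rw [mem_box']
  rfl


end Stmt10

set_option maxHeartbeats 1000000 in
open Stmt10 in
/-- The run extremal index of the max-moving average field at the corner `0` exists and
equals `1 − (1+s)⁻¹ [a_{-1,-1} + min(a_{-1,1},a_{-1,-1}) + a_{1,1} + min(a_{1,-1},a_{-1,-1})]`. -/
theorem stmt_10 {Ω : Type*} [MeasurableSpace Ω] (μ : Measure Ω) [IsProbabilityMeasure μ]
    (Z : ℤ × ℤ → Ω → ℝ) (hmeas : ∀ t, Measurable (Z t))
    (hind : iIndepFun Z μ)
    (hfrechet : ∀ (t : ℤ × ℤ) (v : ℝ), 0 < v →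
      μ {ω | Z t ω ≤ v} = ENNReal.ofReal (Real.exp (-(1 / v))))
    (b c e f : ℝ) (hb : b ∈ Set.Icc (0:ℝ) 1) (hc : c ∈ Set.Icc (0:ℝ) 1)
    (he : e ∈ Set.Icc (0:ℝ) 1) (hf : f ∈ Set.Icc (0:ℝ) 1) :
    HasRunIndex μ (mma Z b c e f) (false, false)
      (1 - (1 + (b + c + e + f))⁻¹ * (b + min c b + e + min f b)) := by
  obtain ⟨hb0, hb1⟩ := hb
  obtain ⟨hc0, hc1⟩ := hc
  obtain ⟨he0, he1⟩ := he
  obtain ⟨hf0, hf1⟩ := hf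
  classical
  set σ : ℝ := 1 + (b + c + e + f) with hσdef
  have hσpos : (0:ℝ) < σ := by rw [hσdef]; linarith
  set Δ : ℝ := 1 + (max b c - b) + (max b f - b) with hΔdef
  have hΔpos : (0:ℝ) < Δ := by
    have h1 := le_max_left b c
    have h2 := le_max_left b f
    rw [hΔdef]; linarith
  set κ : ℝ := Δ / σ with hκdef
  have hκpos : 0 < κ := div_pos hΔpos hσpos
  have hθ : 1 - σ⁻¹ * (b + min c b + e + min f b) = κ := by
    have h1 : min c b + max b c = c + b := by rw [max_comm]; exact min_add_max c b
    have h2 : min f b + max b f = f + b := by rw [max_comm]; exact min_add_max f b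
    rw [hκdef, eq_div_iff hσpos.ne']
    have hexp : (1 - σ⁻¹ * (b + min c b + e + min f b)) * σ =
        σ - (b + min c b + e + min f b) := by
      field_simp
    rw [hexp, hσdef, hΔdef]
    linarith
  rw [hθ]
  have hfst : Tendsto (Prod.fst : ℕ × ℕ → ℕ) atTop atTop := by
    rw [← prod_atTop_atTop_eq]; exact tendsto_fst
  have hsnd : Tendsto (Prod.snd : ℕ × ℕ → ℕ) atTop atTop := by
    rw [← prod_atTop_atTop_eq]; exact tendsto_snd
  have hsqrt : Tendsto Nat.sqrt atTop atTop := by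
    apply tendsto_atTop_atTop_of_monotone (fun a b h => Nat.sqrt_le_sqrt h)
    intro b'
    exact ⟨b' ^ 2, le_of_eq (Nat.sqrt_eq' b').symm⟩
  have hsqrtdiv : Tendsto (fun m : ℕ => (Nat.sqrt m : ℝ) / m) atTop (nhds 0) := by
    have hup : Tendsto (fun m : ℕ => ((Nat.sqrt m : ℕ) : ℝ)⁻¹) atTop (nhds 0) :=
      (tendsto_natCast_atTop_atTop.comp hsqrt).inv_tendsto_atTop
    apply tendsto_of_tendsto_of_tendsto_of_le_of_le' tendsto_const_nhds hup
    · filter_upwards [eventually_ge_atTop 1] with m hm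
      positivity
    · filter_upwards [eventually_ge_atTop 1] with m hm
      have h1 : 0 < Nat.sqrt m := Nat.sqrt_pos.2 hm
      have h2 : (Nat.sqrt m : ℝ) * (Nat.sqrt m : ℝ) ≤ (m : ℝ) := by
        exact_mod_cast Nat.sqrt_le m
      have hs0 : (0:ℝ) < (Nat.sqrt m : ℝ) := by exact_mod_cast h1
      have hmpos : (0:ℝ) < (m : ℝ) := by exact_mod_cast hm
      rw [← one_div, div_le_div_iff₀ hmpos hs0]
      linarith [h2]
  refine ⟨fun n => (Nat.sqrt n.1, Nat.sqrt n.2), ?_, ?_, ?_, ?_⟩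
  · have h := (hsqrt.comp hfst).prodMk (hsqrt.comp hsnd)
    rw [prod_atTop_atTop_eq] at h
    exact h
  · exact hsqrtdiv.comp hfst
  · exact hsqrtdiv.comp hsnd
  intro τ hτ u hu_t
  dsimp only
  have hNN : Tendsto (fun n : ℕ × ℕ => (n.1 : ℝ) * n.2) atTop atTop :=
    (tendsto_natCast_atTop_atTop.comp hfst).atTop_mul_atTop₀
      (tendsto_natCast_atTop_atTop.comp hsnd)
  have hZtail : (μ {ω | (1:ℝ) < Z (0, 0) ω}).toReal = 1 - Real.exp (-1) := by
    have hms : MeasurableSet {ω | Z (0, 0) ω ≤ (1:ℝ)} :=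
      measurableSet_le (hmeas _) measurable_const
    have hset : {ω | (1:ℝ) < Z (0, 0) ω} = {ω | Z (0, 0) ω ≤ (1:ℝ)}ᶜ := by
      ext ω; simp [not_le]
    rw [hset, prob_compl_eq_one_sub hms, hfrechet (0, 0) 1 zero_lt_one,
      ENNReal.toReal_sub_of_le (ENNReal.ofReal_le_one.2 (by
        rw [Real.exp_le_one_iff]; norm_num)) (by simp),
      ENNReal.toReal_one, ENNReal.toReal_ofReal (Real.exp_pos _).le]
    norm_num
  have hepos : (0:ℝ) < 1 - Real.exp (-1) := by
    have h := Real.exp_lt_one_iff.2 (by norm_num : (-1:ℝ) < 0)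
    linarith
  have heu : ∀ᶠ n : ℕ × ℕ in atTop, 1 < u n := by
    have hev1 := hNN.eventually_gt_atTop ((τ + 1) / (1 - Real.exp (-1)))
    have hev2 : ∀ᶠ n : ℕ × ℕ in atTop,
        (n.1 : ℝ) * n.2 * (μ {ω | u n < mma Z b c e f (0, 0) ω}).toReal < τ + 1 :=
      hu_t.eventually (eventually_lt_nhds (by linarith))
    filter_upwards [hev1, hev2] with n h1 h2
    by_contra hle
    push_neg at hle
    have hsub : {ω | (1:ℝ) < Z (0, 0) ω} ⊆ {ω | u n < mma Z b c e f (0, 0) ω} := by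
      intro ω hω
      simp only [Set.mem_setOf_eq] at hω ⊢
      have h3 : Z (0, 0) ω ≤ mma Z b c e f (0, 0) ω := le_max_left _ _
      linarith
    have hmono : (μ {ω | (1:ℝ) < Z (0, 0) ω}).toReal ≤
        (μ {ω | u n < mma Z b c e f (0, 0) ω}).toReal :=
      ENNReal.toReal_mono (measure_ne_top μ _) (measure_mono hsub)
    rw [hZtail] at hmono
    have hN0 : 0 < (n.1 : ℝ) * n.2 := lt_trans (div_pos (by linarith) hepos) h1
    have h4 := (div_lt_iff₀ hepos).1 h1
    nlinarith [mul_le_mul_of_nonneg_left hmono hN0.le]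
  have harg : ∀ y : ℝ, -(1 + b + c + e + f) / y = -(σ / y) := by
    intro y; rw [hσdef]; ring
  have hpev : ∀ᶠ n : ℕ × ℕ in atTop,
      (μ {ω | u n < mma Z b c e f (0, 0) ω}).toReal = 1 - Real.exp (-(σ / u n)) := by
    filter_upwards [heu] with n hn
    rw [meas_X0_gt μ Z hmeas hind hfrechet hb0 hc0 he0 hf0 (by linarith), harg]
  have hp0 : Tendsto (fun n : ℕ × ℕ => (μ {ω | u n < mma Z b c e f (0, 0) ω}).toReal)
      atTop (nhds 0) := by
    have hinv : Tendsto (fun n : ℕ × ℕ => ((n.1 : ℝ) * n.2)⁻¹) atTop (nhds 0) :=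
      hNN.inv_tendsto_atTop
    have h := hu_t.mul hinv
    rw [mul_zero] at h
    refine Tendsto.congr' ?_ h
    filter_upwards [hNN.eventually_ge_atTop 1] with n hn
    have hne : ((n.1 : ℝ) * n.2) ≠ 0 := by linarith
    rw [mul_comm ((n.1:ℝ) * n.2) _, mul_assoc, mul_inv_cancel₀ hne, mul_one]
  have hx0 : Tendsto (fun n : ℕ × ℕ => σ / u n) atTop (nhds 0) := by
    have h1p : Tendsto (fun n : ℕ × ℕ =>
        1 - (μ {ω | u n < mma Z b c e f (0, 0) ω}).toReal) atTop (nhds 1) := by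
      have h := (tendsto_const_nhds (x := (1:ℝ)) (f := atTop)).sub hp0
      simpa using h
    have hlog : Tendsto (fun n : ℕ × ℕ =>
        -Real.log (1 - (μ {ω | u n < mma Z b c e f (0, 0) ω}).toReal)) atTop (nhds 0) := by
      have hcont := ((Real.continuousAt_log one_ne_zero).tendsto.comp h1p).neg
      simpa using hcont
    refine Tendsto.congr' ?_ hlog
    filter_upwards [hpev] with n hn
    rw [hn]
    have h2 : (1 : ℝ) - (1 - Real.exp (-(σ / u n))) = Real.exp (-(σ / u n)) := by ring
    rw [h2, Real.log_exp, neg_neg]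
  have hxpos : ∀ᶠ n : ℕ × ℕ in atTop, 0 < σ / u n := by
    filter_upwards [heu] with n hn
    exact div_pos hσpos (by linarith)
  have hxdivp : Tendsto (fun n : ℕ × ℕ =>
      (σ / u n) / (μ {ω | u n < mma Z b c e f (0, 0) ω}).toReal) atTop (nhds 1) := by
    have h := tendsto_div_one_sub_exp hx0 hxpos
    refine Tendsto.congr' ?_ h
    filter_upwards [hpev] with n hn
    rw [hn]
  have hNx : Tendsto (fun n : ℕ × ℕ => (n.1 : ℝ) * n.2 * (σ / u n)) atTop (nhds τ) := by
    have h := hu_t.mul hxdivp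
    rw [mul_one] at h
    refine Tendsto.congr' ?_ h
    filter_upwards [hpev, hxpos] with n h1 h2
    have hppos : 0 < (μ {ω | u n < mma Z b c e f (0, 0) ω}).toReal := by
      rw [h1]
      have h3 := Real.exp_lt_one_iff.2 (by linarith : -(σ / u n) < 0)
      linarith
    have key : ∀ y pp N' : ℝ, pp ≠ 0 → (N' * pp) * (y / pp) = N' * y := by
      intro y pp N' hpp; field_simp
    exact key _ _ _ hppos.ne'
  have hr31 : ∀ᶠ n : ℕ × ℕ in atTop, 3 ≤ Nat.sqrt n.1 :=
    (hsqrt.comp hfst).eventually_ge_atTop 3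
  have hr32 : ∀ᶠ n : ℕ × ℕ in atTop, 3 ≤ Nat.sqrt n.2 :=
    (hsqrt.comp hsnd).eventually_ge_atTop 3
  have hRN : Tendsto (fun n : ℕ × ℕ =>
      ((Nat.sqrt n.1 : ℝ) * (Nat.sqrt n.2)) / ((n.1 : ℝ) * n.2)) atTop (nhds 0) := by
    have h := (hsqrtdiv.comp hfst).mul (hsqrtdiv.comp hsnd)
    rw [mul_zero] at h
    exact h.congr fun n => div_mul_div_comm _ _ _ _
  have hRu : Tendsto (fun n : ℕ × ℕ =>
      (Nat.sqrt n.1 : ℝ) * (Nat.sqrt n.2) * (u n)⁻¹) atTop (nhds 0) := by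
    have h := (hRN.mul hNx).div_const σ
    rw [zero_mul, zero_div] at h
    refine Tendsto.congr' ?_ h
    filter_upwards [heu, hNN.eventually_ge_atTop 1] with n h1 h2
    have hN0 : ((n.1 : ℝ) * n.2) ≠ 0 := by linarith
    have hu0 : u n ≠ 0 := by intro hh; rw [hh] at h1; linarith
    field_simp
    have hn1 : (n.1:ℝ) ≠ 0 := left_ne_zero_of_mul hN0
    have hn2 : (n.2:ℝ) ≠ 0 := right_ne_zero_of_mul hN0
    rw [mul_assoc (_ * _) (n.1:ℝ), mul_div_assoc, div_self hN0, mul_one]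
  set CA : ℕ × ℕ → ℝ := fun n =>
    ∑ s ∈ NS (box (Nat.sqrt n.1, Nat.sqrt n.2)),
      W b c e f (TA (Nat.sqrt n.1, Nat.sqrt n.2)) s with hCAdef
  have ha : Tendsto (fun n : ℕ × ℕ => CA n / u n) atTop (nhds 0) := by
    have hub := hRu.const_mul 5
    rw [mul_zero] at hub
    apply tendsto_of_tendsto_of_tendsto_of_le_of_le' tendsto_const_nhds hub
    · filter_upwards [heu] with n hn
      refine div_nonneg ?_ (by linarith)
      exact Finset.sum_nonneg fun s _ => W_nonneg _ _
    · filter_upwards [heu] with n hn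
      have h1 : CA n ≤ 5 * ((Nat.sqrt n.1 : ℝ) * (Nat.sqrt n.2)) :=
        sum_TA_le hb1 hc1 he1 hf1
      have hu0 : (0:ℝ) < u n := by linarith
      rw [div_eq_mul_inv]
      calc CA n * (u n)⁻¹ ≤ 5 * ((Nat.sqrt n.1 : ℝ) * (Nat.sqrt n.2)) * (u n)⁻¹ :=
        mul_le_mul_of_nonneg_right h1 (inv_nonneg.2 hu0.le)
      _ = 5 * ((Nat.sqrt n.1 : ℝ) * (Nat.sqrt n.2) * (u n)⁻¹) := by ring
  have hG : Tendsto (fun n : ℕ × ℕ =>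
      Real.exp (-(CA n / u n)) *
        ((1 - Real.exp (-(κ * (σ / u n)))) / (1 - Real.exp (-(σ / u n))))) atTop (nhds κ) := by
    have h1 : Tendsto (fun n : ℕ × ℕ => Real.exp (-(CA n / u n))) atTop (nhds 1) := by
      have h2 := (Real.continuous_exp.tendsto 0).comp (by simpa using ha.neg)
      rw [Real.exp_zero] at h2
      exact h2
    have h2 := tendsto_ratio_exp hx0 hxpos hκpos
    have h3 := h1.mul h2
    rw [one_mul] at h3
    exact h3
  refine Tendsto.congr' ?_ hG
  filter_upwards [heu, hr31, hr32] with n hu1 h31 h32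
  have hu0 : (0:ℝ) < u n := by linarith
  have hcor : corner (Nat.sqrt n.1, Nat.sqrt n.2) (false, false) = ((0:ℤ), (0:ℤ)) := rfl
  rw [hcor]
  have hset1 : {ω | ∀ t : ℤ × ℤ, inBox (Nat.sqrt n.1, Nat.sqrt n.2) t →
      t ≠ ((0:ℤ), (0:ℤ)) → mma Z b c e f t ω ≤ u n} =
      {ω | ∀ t ∈ TA (Nat.sqrt n.1, Nat.sqrt n.2), mma Z b c e f t ω ≤ u n} := by
    ext ω
    simp only [Set.mem_setOf_eq]
    constructor
    · intro H t ht
      rw [TA, Finset.mem_erase] at ht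
      exact H t (mem_box_iff.1 ht.2) ht.1
    · intro H t hin hne
      exact H t (by rw [TA, Finset.mem_erase]; exact ⟨hne, mem_box_iff.2 hin⟩)
  rw [hset1,
    meas_num μ Z hmeas hind hfrechet hb0 hb1 hc0 hc1 he0 he1 hf0 hf1 hu0 h31 h32,
    meas_X0_gt μ Z hmeas hind hfrechet hb0 hc0 he0 hf0 hu0]
  have hY : 0 < 1 - Real.exp (-(σ / u n)) := by
    have h3 := Real.exp_lt_one_iff.2 (neg_lt_zero.2 (div_pos hσpos hu0))
    linarith
  have e1 : -(1 + b + c + e + f) / u n = -(σ / u n) := harg (u n)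
  have e2 : -(CA n) / u n = -(CA n / u n) := neg_div _ _
  have e3 : κ * (σ / u n) = Δ / u n := by
    rw [hκdef]
    field_simp
  have e4 : -(CA n + (1 + (max b c - b) + (max b f - b))) / u n =
      -(CA n / u n) + -(Δ / u n) := by
    rw [hΔdef]; ring
  rw [e1]
  rw [show (∑ s ∈ NS (box (Nat.sqrt n.1, Nat.sqrt n.2)),
      W b c e f (TA (Nat.sqrt n.1, Nat.sqrt n.2)) s) = CA n from rfl, e2, e4, ← e3,
    Real.exp_add]
  field_simp
end

section
/- Let (V(t): t ∈ Z^k) be nonnegative integrable random variables with E V(t) = 1 for all t, and suppose there exist a > 0 and an event A of positive probability on which limsup_{‖t‖→∞} V(t) > a. Then lim_{M→∞} liminf over growing rectangles of E[ max_{t ∈ R ∖ R_M ∪ {0}} V(t) − max_{t ∈ R ∖ R_M} V(t) ] < 1, i.e., the limit in the preceding statement fails to equal E V(0) = 1. -/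
open MeasureTheory Filter

/-- If `V(t) ≥ 0` with `E V(t) = 1`, `V(0) > 0` a.s., and there are `a > 0` and an event `A`
of positive probability on which `limsup_{‖t‖ → ∞} V(t) > a`, then for rectangles
`R_{r_n}` growing to `ℤ^k`,
`limsup_M liminf_n E[max_{t ∈ R_{r_n} ∖ R_M ∪ {0}} V(t) − max_{t ∈ R_{r_n} ∖ R_M} V(t)] < 1`,
i.e. the limit fails to equal `E V(0) = 1`. -/
theorem stmt_16 {k : ℕ} {Ω : Type*} [MeasurableSpace Ω] (μ : Measure Ω)
    [IsProbabilityMeasure μ] (V : (Fin k → ℤ) → Ω → ℝ)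
    (hmeas : ∀ t, Measurable (V t)) (hnn : ∀ t ω, 0 ≤ V t ω)
    (hint : ∀ t, Integrable (V t) μ) (hmean : ∀ t, ∫ ω, V t ω ∂μ = 1)
    (hpos : ∀ᵐ ω ∂μ, 0 < V 0 ω)
    (a : ℝ) (ha : 0 < a) (A : Set Ω) (hA : MeasurableSet A) (hApos : 0 < μ A)
    (hbig : ∀ ω ∈ A, ∃ᶠ t : (Fin k → ℤ) in cofinite, a < V t ω)
    (r : ℕ → Fin k → ℕ) (hr : ∀ l, Tendsto (fun n => r n l) atTop atTop) :
    Filter.limsup (fun M : ℕ =>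
        Filter.liminf (fun n : ℕ =>
          ∫ ω, (max (V 0 ω)
              (⨆ t : {t : Fin k → ℤ //
                  (∀ l, |t l| ≤ (r n l : ℤ) - 1) ∧ ∃ l, (M : ℤ) ≤ |t l|}, V t.1 ω) -
            ⨆ t : {t : Fin k → ℤ //
                (∀ l, |t l| ≤ (r n l : ℤ) - 1) ∧ ∃ l, (M : ℤ) ≤ |t l|}, V t.1 ω) ∂μ)
          atTop)
      atTop < 1 := by
  classical
  -- finiteness of the index subtypes
  have hfinset : ∀ (c : Fin k → ℤ) (Q : (Fin k → ℤ) → Prop),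
      {t : Fin k → ℤ | (∀ l, |t l| ≤ c l) ∧ Q t}.Finite := by
    intro c Q
    apply Set.Finite.subset (Set.Finite.pi (fun l => Set.finite_Icc (-(c l)) (c l)))
    intro t ht
    simp only [Set.mem_pi, Set.mem_univ, Set.mem_Icc, forall_true_left]
    intro l
    exact abs_le.mp (ht.1 l)
  have hfin : ∀ (n M : ℕ), Finite {t : Fin k → ℤ //
      (∀ l, |t l| ≤ (r n l : ℤ) - 1) ∧ ∃ l, (M : ℤ) ≤ |t l|} := by
    intro n M
    exact (hfinset (fun l => (r n l : ℤ) - 1) _).to_subtype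
  -- the sup S and difference D
  set S : ℕ → ℕ → Ω → ℝ := fun n M ω =>
    ⨆ t : {t : Fin k → ℤ //
        (∀ l, |t l| ≤ (r n l : ℤ) - 1) ∧ ∃ l, (M : ℤ) ≤ |t l|}, V t.1 ω with hS
  set D : ℕ → ℕ → Ω → ℝ := fun n M ω => max (V 0 ω) (S n M ω) - S n M ω with hD
  have hSnn : ∀ n M ω, 0 ≤ S n M ω := fun n M ω =>
    Real.iSup_nonneg (fun t => hnn t.1 ω)
  have hSmeas : ∀ n M, Measurable (S n M) := by
    intro n M
    haveI := hfin n M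
    exact Measurable.iSup (fun t => hmeas t.1)
  have hDnn : ∀ n M ω, 0 ≤ D n M ω := fun n M ω =>
    sub_nonneg.mpr (le_max_right _ _)
  have hDle : ∀ n M ω, D n M ω ≤ V 0 ω := by
    intro n M ω
    have h1 : max (V 0 ω) (S n M ω) ≤ V 0 ω + S n M ω :=
      max_le (le_add_of_nonneg_right (hSnn n M ω)) (le_add_of_nonneg_left (hnn 0 ω))
    simp only [hD]
    linarith
  have hDmeas : ∀ n M, Measurable (D n M) := fun n M =>
    ((hmeas 0).max (hSmeas n M)).sub (hSmeas n M)
  have hDint : ∀ n M, Integrable (D n M) μ := by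
    intro n M
    refine (hint 0).mono (hDmeas n M).aestronglyMeasurable ?_
    filter_upwards with ω
    rw [Real.norm_eq_abs, Real.norm_eq_abs, abs_of_nonneg (hDnn n M ω),
      abs_of_nonneg (hnn 0 ω)]
    exact hDle n M ω
  -- W = V0 - D
  set W : ℕ → ℕ → Ω → ℝ := fun n M ω => V 0 ω - D n M ω with hW
  have hWnn : ∀ n M ω, 0 ≤ W n M ω := fun n M ω => sub_nonneg.mpr (hDle n M ω)
  have hWmeas : ∀ n M, Measurable (W n M) := fun n M => (hmeas 0).sub (hDmeas n M)
  have hWint : ∀ n M, Integrable (W n M) μ := fun n M => (hint 0).sub (hDint n M)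
  -- pointwise eventual lower bound on W, on A
  have hptwise : ∀ M : ℕ, ∀ ω ∈ A,
      ∀ᶠ n in atTop, min (V 0 ω) a ≤ W n M ω := by
    intro M ω hω
    -- find t₀ outside box M with a < V t₀ ω
    have hinf : {t : Fin k → ℤ | a < V t ω}.Infinite :=
      frequently_cofinite_iff_infinite.mp (hbig ω hω)
    have hbox : {t : Fin k → ℤ | (∀ l, |t l| ≤ (M : ℤ) - 1) ∧ True}.Finite :=
      hfinset _ _
    obtain ⟨t₀, ht₀I, ht₀B⟩ := (hinf.diff (hbox.subset (by intro t ht; exact ⟨ht, trivial⟩) :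
      {t : Fin k → ℤ | ∀ l, |t l| ≤ (M : ℤ) - 1}.Finite)).nonempty
    have ht₀a : a < V t₀ ω := ht₀I
    have ht₀M : ∃ l, (M : ℤ) ≤ |t₀ l| := by
      by_contra h
      push_neg at h
      exact ht₀B (fun l => by have := h l; omega)
    -- eventually t₀ is in the box of radius r n
    have hev : ∀ᶠ n in atTop, ∀ l, |t₀ l| ≤ (r n l : ℤ) - 1 := by
      rw [eventually_all]
      intro l
      filter_upwards [(hr l).eventually_ge_atTop (|t₀ l| + 1).toNat] with n hn
      have : (|t₀ l| + 1 : ℤ) ≤ (r n l : ℤ) := Int.toNat_le.mp hn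
      omega
    filter_upwards [hev] with n hn
    -- a ≤ S n M ω
    haveI := hfin n M
    have hSa : a ≤ S n M ω := by
      refine le_trans (le_of_lt ht₀a) ?_
      have hb : BddAbove (Set.range fun t : {t : Fin k → ℤ //
          (∀ l, |t l| ≤ (r n l : ℤ) - 1) ∧ ∃ l, (M : ℤ) ≤ |t l|} => V t.1 ω) :=
        Set.Finite.bddAbove (Set.finite_range _)
      simp only [hS]
      exact le_ciSup hb (⟨t₀, hn, ht₀M⟩ : {t : Fin k → ℤ //
          (∀ l, |t l| ≤ (r n l : ℤ) - 1) ∧ ∃ l, (M : ℤ) ≤ |t l|})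
    simp only [hW, hD]
    rcases max_cases (V 0 ω) (S n M ω) with ⟨h1, h2⟩ | ⟨h1, h2⟩ <;>
      rcases min_cases (V 0 ω) a with ⟨h3, h4⟩ | ⟨h3, h4⟩ <;> rw [h1, h3] <;> linarith
  -- the Lebesgue-integral lower bound ε'
  set g : Ω → ENNReal := A.indicator (fun ω => ENNReal.ofReal (min (V 0 ω) a)) with hg
  set ε' : ENNReal := ∫⁻ ω, g ω ∂μ with hε'
  have hgmeas : Measurable g :=
    (((hmeas 0).min measurable_const).ennreal_ofReal).indicator hA
  have hVpos : μ {ω | ¬ 0 < V 0 ω} = 0 := by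
    rw [← MeasureTheory.ae_iff]; exact hpos
  have hε'pos : 0 < ε' := by
    rw [hε', lintegral_pos_iff_support hgmeas]
    have hsub : A ∩ {ω | 0 < V 0 ω} ⊆ Function.support g := by
      intro ω ⟨h1, h2⟩
      simp only [hg, Function.mem_support, Set.indicator_of_mem h1]
      simp only [ne_eq, ENNReal.ofReal_eq_zero, not_le]
      exact lt_min h2 ha
    calc 0 < μ A := hApos
      _ = μ (A ∩ {ω | 0 < V 0 ω}) := (measure_inter_conull hVpos).symm
      _ ≤ μ (Function.support g) := measure_mono hsub
  have hε'ne : ε' ≠ ⊤ := by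
    have : ε' ≤ ∫⁻ _, ENNReal.ofReal a ∂μ := by
      apply lintegral_mono
      intro ω
      refine le_trans (Set.indicator_le_self _ _ ω) ?_
      exact ENNReal.ofReal_le_ofReal (min_le_right _ _)
    rw [lintegral_const, measure_univ, mul_one] at this
    exact ne_top_of_le_ne_top ENNReal.ofReal_ne_top this
  set δ : ℝ := (ε' / 2).toReal with hδ
  have hδpos : 0 < δ := ENNReal.toReal_pos
    (ENNReal.div_ne_zero.mpr ⟨hε'pos.ne', by norm_num⟩)
    (by simp [ENNReal.div_eq_top, hε'ne])
  -- main step: for every M, liminf_n ∫ D ≤ 1 - δ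
  have hmain : ∀ M : ℕ, Filter.liminf (fun n => ∫ ω, D n M ω ∂μ) atTop ≤ 1 - δ := by
    intro M
    -- Fatou
    have hfatou : ε' ≤ Filter.liminf
        (fun n => ∫⁻ ω, ENNReal.ofReal (W n M ω) ∂μ) atTop := by
      refine le_trans ?_ (lintegral_liminf_le
        (fun n => (hWmeas n M).ennreal_ofReal))
      apply lintegral_mono_ae
      filter_upwards [hpos] with ω hω
      by_cases hωA : ω ∈ A
      · rw [hg]
        simp only [Set.indicator_of_mem hωA]
        refine le_liminf_of_le (by isBoundedDefault) ?_
        filter_upwards [hptwise M ω hωA] with n hn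
        exact ENNReal.ofReal_le_ofReal hn
      · simp [hg, Set.indicator_of_notMem hωA]
    have hhalf : ε' / 2 < Filter.liminf
        (fun n => ∫⁻ ω, ENNReal.ofReal (W n M ω) ∂μ) atTop :=
      lt_of_lt_of_le (ENNReal.half_lt_self hε'pos.ne' hε'ne) hfatou
    have hev2 : ∀ᶠ n in atTop, ∫ ω, D n M ω ∂μ ≤ 1 - δ := by
      filter_upwards [eventually_lt_of_lt_liminf hhalf] with n hn
      have hWn : δ ≤ ∫ ω, W n M ω ∂μ := by
        rw [integral_eq_lintegral_of_nonneg_ae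
          (Filter.Eventually.of_forall (hWnn n M)) (hWmeas n M).aestronglyMeasurable]
        have hWntop : ∫⁻ ω, ENNReal.ofReal (W n M ω) ∂μ ≠ ⊤ := by
          have := (hWint n M).hasFiniteIntegral
          rw [hasFiniteIntegral_iff_norm] at this
          refine ne_top_of_le_ne_top this.ne (lintegral_mono fun ω => ?_)
          exact ENNReal.ofReal_le_ofReal (le_abs_self _ |>.trans (Real.norm_eq_abs _ ▸ le_rfl))
        exact ENNReal.toReal_le_toReal (by simp [ENNReal.div_eq_top, hε'ne]) hWntop
          |>.mpr hn.le
      have hDW : ∫ ω, D n M ω ∂μ = 1 - ∫ ω, W n M ω ∂μ := by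
        have : ∫ ω, W n M ω ∂μ = (∫ ω, V 0 ω ∂μ) - ∫ ω, D n M ω ∂μ :=
          integral_sub (hint 0) (hDint n M)
        rw [hmean 0] at this
        linarith
      rw [hDW]; linarith
    -- conclude liminf ≤ 1 - δ
    have hb1 : IsBoundedUnder (· ≤ ·) atTop (fun n => ∫ ω, D n M ω ∂μ) :=
      isBoundedUnder_of ⟨1, fun n => by
        calc ∫ ω, D n M ω ∂μ ≤ ∫ ω, V 0 ω ∂μ :=
              integral_mono (hDint n M) (hint 0) (hDle n M)
          _ = 1 := hmean 0⟩
    have hb2 : IsBoundedUnder (· ≥ ·) atTop (fun n => ∫ ω, D n M ω ∂μ) :=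
      isBoundedUnder_of ⟨0, fun n => integral_nonneg (hDnn n M)⟩
    exact le_trans (liminf_le_limsup hb1 hb2) (limsup_le_of_le hb2.isCoboundedUnder_le hev2)
  -- conclude
  have hbound : Filter.limsup (fun M : ℕ =>
      Filter.liminf (fun n : ℕ => ∫ ω, D n M ω ∂μ) atTop) atTop ≤ 1 - δ := by
    have hbb : IsBoundedUnder (· ≥ ·) atTop (fun M : ℕ =>
        Filter.liminf (fun n : ℕ => ∫ ω, D n M ω ∂μ) atTop) := by
      refine isBoundedUnder_of ⟨0, fun M => ?_⟩
      refine le_liminf_of_le ?_ (Filter.Eventually.of_forall fun n => integral_nonneg (hDnn n M))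
      refine (isBoundedUnder_of ⟨1, fun n => ?_⟩).isCoboundedUnder_ge
      calc ∫ ω, D n M ω ∂μ ≤ ∫ ω, V 0 ω ∂μ :=
            integral_mono (hDint n M) (hint 0) (hDle n M)
        _ = 1 := hmean 0
    exact limsup_le_of_le hbb.isCoboundedUnder_le (Filter.Eventually.of_forall hmain)
  calc Filter.limsup (fun M : ℕ =>
      Filter.liminf (fun n : ℕ => ∫ ω, D n M ω ∂μ) atTop) atTop ≤ 1 - δ := hbound
    _ < 1 := by linarith
end
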